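/- arXiv:1307.3654 — 9 statements merged into one kernel-verified Lean document; each statement's English description precedes it below -/
import Mathlib

section
/- Let P be a statistical model on a measurable space (X, A) and I a set. For each i in I, let C_i be a sub-σ-algebra of A and let (P_{i,η} : η ∈ H_i) be a family of submodels of P whose union is P, such that C_i is both complete and sufficient for each P_{i,η}. Then the σ-algebra ⋁_{i∈I} C_i generated by the union of the C_i is complete for P, i.e., every ⋁_{i∈I} C_i-measurable real function h that is integrable with every P ∈ P and satisfies ∫ h dP = 0 for all P ∈ P vanishes P-almost surely for every P ∈ P. -/
open MeasureTheory

/-- A sub-σ-algebra `C` of `mX` is (Lehmann–Scheffé) complete for the model `M`: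
every `C`-measurable real function, integrable with respect to every member of `M`
and with expectation `0` under every member, vanishes `P`-a.s. for every `P ∈ M`. -/
def IsLSComplete {X : Type*} (mX : MeasurableSpace X) (C : MeasurableSpace X)
    (M : Set (@Measure X mX)) : Prop :=
  ∀ h : X → ℝ, Measurable[C] h → (∀ P ∈ M, Integrable h P) →
    (∀ P ∈ M, ∫ x, h x ∂P = 0) → ∀ P ∈ M, h =ᵐ[P] 0

/-- A sub-σ-algebra `C` of `mX` is sufficient for the model `M`: for every
`mX`-measurable set `A` there is a single `C`-measurable version of the conditional
probability of `A` given `C`, valid simultaneously for all `P ∈ M`. -/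
def IsLSSufficient {X : Type*} (mX : MeasurableSpace X) (C : MeasurableSpace X)
    (M : Set (@Measure X mX)) : Prop :=
  ∀ A : Set X, MeasurableSet[mX] A →
    ∃ g : X → ℝ, Measurable[C] g ∧
      ∀ P ∈ M, ∀ s : Set X, MeasurableSet[C] s →
        ∫ x in s, g x ∂P = (P (s ∩ A)).toReal

/-!
Fix `i`. Sufficiency of `C i` for each piece `Q i η` of the exhaustion gives, for every integrable
`f`, one `C i`-measurable function that is a version of the conditional expectation of `f` given
`C i` under all members of `Q i η`: first for indicators, then for nonnegative functions by monotone
approximation, and in general by splitting into positive and negative parts. If `h` is an unbiased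
estimator of zero for `M` and `∫_T h dP = 0` for all `P ∈ M`, this common conditional expectation
of `1_T h` is a `C i`-measurable unbiased estimator of zero on `Q i η`, hence vanishes by
completeness; thus `∫_{S ∩ T} h dP = 0` for every `S ∈ C i`. By induction `h` integrates to zero
over all finite intersections of sets from the `C i`, a π-system generating `⨆ i, C i`, so over
every set of `⨆ i, C i`, and `h = 0` a.e.
-/

open Set Filter
open scoped ENNReal

section

variable {X : Type*} {c mX : MeasurableSpace X}

theorem ae_nonneg_of_forall_integrableOn_setIntegral_nonneg (hc : c ≤ mX) {P : Measure X}
    [IsFiniteMeasure P] {g : X → ℝ} (hg : Measurable[c] g)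
    (h : ∀ s, MeasurableSet[c] s → IntegrableOn g s P → 0 ≤ ∫ x in s, g x ∂P) :
    0 ≤ᵐ[P] g := by
  -- `g` need not be integrable, but its truncations `g · 1{|g| ≤ n}` are
  have htrunc : ∀ n : ℕ, 0 ≤ᵐ[P] {x | |g x| ≤ n}.indicator g := by
    intro n
    set B := {x | |g x| ≤ n}
    have hB : MeasurableSet[c] B := (measurable_abs.comp hg) measurableSet_Iic
    have hgB : StronglyMeasurable[c] (B.indicator g) := (hg.indicator hB).stronglyMeasurable
    have hint : Integrable (B.indicator g) (P.trim hc) := by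
      refine Integrable.of_bound (mα := c) hgB.aestronglyMeasurable n (ae_of_all _ fun x => ?_)
      by_cases hx : x ∈ B
      · simpa [indicator_of_mem hx] using (show |g x| ≤ n from hx)
      · simp [indicator_of_notMem hx]
    refine ae_le_of_ae_le_trim (ae_nonneg_of_forall_setIntegral_nonneg hint fun s hs _ => ?_)
    have hgBs : IntegrableOn g (s ∩ B) P :=
      ((integrable_indicator_iff (hc _ hB)).1 (integrable_of_integrable_trim hc hint)).mono_set
        inter_subset_right
    rw [← setIntegral_trim hc hgB hs, setIntegral_indicator (hc _ hB)]
    exact h _ (hs.inter hB) hgBs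
  filter_upwards [ae_all_iff.2 htrunc] with x hx
  obtain ⟨n, hn⟩ := exists_nat_ge |g x|
  simpa [indicator_of_mem (show x ∈ {x | |g x| ≤ n} from hn)] using hx n

theorem setLIntegral_ofReal_eq_of_setIntegral_eq (hc : c ≤ mX) {P : Measure X}
    [IsFiniteMeasure P] {g : X → ℝ} (hg : Measurable[c] g) {A : Set X}
    (h : ∀ s, MeasurableSet[c] s → ∫ x in s, g x ∂P = (P (s ∩ A)).toReal)
    {s : Set X} (hs : MeasurableSet[c] s) :
    ∫⁻ x in s, ENNReal.ofReal (g x) ∂P = P (s ∩ A) := by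
  -- if `g` were not integrable, `h` could hold through the junk value `∫ = 0`; the a.e. bounds
  -- `0 ≤ g ≤ 1` exclude this
  have hg_nonneg : 0 ≤ᵐ[P] g :=
    ae_nonneg_of_forall_integrableOn_setIntegral_nonneg hc hg fun s hs _ =>
      (h s hs).symm ▸ ENNReal.toReal_nonneg
  have hg_le_one : 0 ≤ᵐ[P] fun x => 1 - g x := by
    refine ae_nonneg_of_forall_integrableOn_setIntegral_nonneg hc (measurable_const.sub hg)
      fun s hs hint => ?_
    have hgs : IntegrableOn g s P := by
      convert (integrableOn_const (C := (1 : ℝ))).sub hint using 1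
      ext x
      simp
    rw [integral_sub (integrableOn_const (C := (1 : ℝ))) hgs, h s hs, setIntegral_const,
      smul_eq_mul, mul_one, sub_nonneg, measureReal_def]
    exact ENNReal.toReal_mono (measure_ne_top _ _) (measure_mono inter_subset_left)
  have hgi : Integrable g P := by
    refine .of_bound (hg.mono hc le_rfl).aestronglyMeasurable 1 ?_
    filter_upwards [hg_nonneg, hg_le_one] with x h0 h1
    rw [Real.norm_eq_abs, abs_le]
    simp only [Pi.zero_apply, sub_nonneg] at h0 h1
    constructor <;> linarith
  rw [← ofReal_integral_eq_lintegral_ofReal hgi.integrableOn (ae_restrict_of_ae hg_nonneg),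
    h s hs, ENNReal.ofReal_toReal (measure_ne_top _ _)]

theorem ae_le_of_forall_setLIntegral_le_of_sigmaFinite' (hc : c ≤ mX) {P : Measure X}
    [SigmaFinite (P.trim hc)] {F G : X → ℝ≥0∞} (hF : Measurable[c] F) (hG : Measurable[c] G)
    (h : ∀ s, MeasurableSet[c] s → ∫⁻ x in s, F x ∂P ≤ ∫⁻ x in s, G x ∂P) : F ≤ᵐ[P] G :=
  ae_le_of_ae_le_trim <| ae_le_of_forall_setLIntegral_le_of_sigmaFinite hF fun s hs _ => by
    simpa only [setLIntegral_trim hc hF hs, setLIntegral_trim hc hG hs] using h s hs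

theorem setIntegral_toReal_eq_toReal_setLIntegral {P : Measure X} {G : X → ℝ≥0∞}
    (hG : Measurable G) {s : Set X} (hs : ∫⁻ x in s, G x ∂P ≠ ∞) :
    ∫ x in s, (G x).toReal ∂P = (∫⁻ x in s, G x ∂P).toReal :=
  integral_toReal hG.aemeasurable (ae_lt_top hG hs)

variable (c) in
def HasCommonLCondExp (M : Set (Measure X)) (F : X → ℝ≥0∞) : Prop :=
  ∃ G : X → ℝ≥0∞, Measurable[c] G ∧
    ∀ P ∈ M, ∀ s, MeasurableSet[c] s → ∫⁻ x in s, G x ∂P = ∫⁻ x in s, F x ∂P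

variable (c) in
def HasCommonCondExp (M : Set (Measure X)) (f : X → ℝ) : Prop :=
  ∃ g : X → ℝ, Measurable[c] g ∧ ∀ P ∈ M, Integrable g P ∧
    ∀ s, MeasurableSet[c] s → ∫ x in s, g x ∂P = ∫ x in s, f x ∂P

namespace HasCommonLCondExp

variable {M : Set (Measure X)}

theorem indicator_const (hc : c ≤ mX) (hfin : ∀ P ∈ M, IsFiniteMeasure P)
    (hsuff : IsLSSufficient mX c M) (r : ℝ≥0∞) {A : Set X} (hA : MeasurableSet A) :
    HasCommonLCondExp c M (A.indicator fun _ => r) := by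
  obtain ⟨g, hg, hgA⟩ := hsuff A hA
  refine ⟨fun x => r * ENNReal.ofReal (g x), hg.ennreal_ofReal.const_mul r, fun P hP s hs => ?_⟩
  have := hfin P hP
  rw [lintegral_const_mul r (hg.mono hc le_rfl).ennreal_ofReal,
    setLIntegral_ofReal_eq_of_setIntegral_eq hc hg (hgA P hP) hs, lintegral_indicator_const hA,
    Measure.restrict_apply hA, inter_comm]

theorem add (hc : c ≤ mX) {F F' : X → ℝ≥0∞} (hFm : Measurable F) (hF : HasCommonLCondExp c M F)
    (hF' : HasCommonLCondExp c M F') : HasCommonLCondExp c M (F + F') := by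
  obtain ⟨G, hGm, hG⟩ := hF
  obtain ⟨G', hG'm, hG'⟩ := hF'
  refine ⟨G + G', hGm.add hG'm, fun P hP s hs => ?_⟩
  simp only [Pi.add_apply]
  rw [lintegral_add_left (hGm.mono hc le_rfl), lintegral_add_left hFm, hG P hP s hs,
    hG' P hP s hs]

theorem iSup (hc : c ≤ mX) (hfin : ∀ P ∈ M, IsFiniteMeasure P) {F : ℕ → X → ℝ≥0∞}
    (hFm : ∀ n, Measurable (F n)) (hmono : Monotone F) (hF : ∀ n, HasCommonLCondExp c M (F n)) :
    HasCommonLCondExp c M fun x => ⨆ n, F n x := by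
  choose G hGm hG using hF
  refine ⟨fun x => ⨆ n, G n x, .iSup hGm, fun P hP s hs => ?_⟩
  have := hfin P hP
  have hGmono : ∀ᵐ x ∂P, Monotone fun n => G n x := by
    have hstep : ∀ n, G n ≤ᵐ[P] G (n + 1) := fun n =>
      ae_le_of_forall_setLIntegral_le_of_sigmaFinite' hc (hGm n) (hGm (n + 1)) fun t ht => by
        rw [hG n P hP t ht, hG (n + 1) P hP t ht]
        exact lintegral_mono (hmono n.le_succ)
    filter_upwards [ae_all_iff.2 hstep] with x hx using monotone_nat_of_le_succ hx
  rw [lintegral_iSup' (fun n => ((hGm n).mono hc le_rfl).aemeasurable) (ae_restrict_of_ae hGmono),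
    lintegral_iSup hFm hmono]
  exact iSup_congr fun n => hG n P hP s hs

theorem of_measurable (hc : c ≤ mX) (hfin : ∀ P ∈ M, IsFiniteMeasure P)
    (hsuff : IsLSSufficient mX c M) {F : X → ℝ≥0∞} (hF : Measurable F) :
    HasCommonLCondExp c M F :=
  Measurable.ennreal_induction (fun r _ hA => indicator_const hc hfin hsuff r hA)
    (fun _ _ _ hFm _ hF hF' => hF.add hc hFm hF') (fun _ hFm hmono hF => iSup hc hfin hFm hmono hF)
    hF

end HasCommonLCondExp

theorem HasCommonCondExp.of_integrable {M : Set (Measure X)} (hc : c ≤ mX)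
    (hfin : ∀ P ∈ M, IsFiniteMeasure P) (hsuff : IsLSSufficient mX c M) {f : X → ℝ}
    (hf : Measurable f) (hfi : ∀ P ∈ M, Integrable f P) : HasCommonCondExp c M f := by
  obtain ⟨G₁, hG₁m, hG₁⟩ := HasCommonLCondExp.of_measurable hc hfin hsuff hf.ennreal_ofReal
  obtain ⟨G₂, hG₂m, hG₂⟩ := HasCommonLCondExp.of_measurable hc hfin hsuff hf.neg.ennreal_ofReal
  refine ⟨fun x => (G₁ x).toReal - (G₂ x).toReal, hG₁m.ennreal_toReal.sub hG₂m.ennreal_toReal,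
    fun P hP => ?_⟩
  have hG₁m' := hG₁m.mono hc le_rfl
  have hG₂m' := hG₂m.mono hc le_rfl
  have hfin₁ : ∀ s, MeasurableSet[c] s → ∫⁻ x in s, G₁ x ∂P ≠ ∞ := fun s hs => by
    rw [hG₁ P hP s hs]
    exact ((lintegral_ofReal_le_lintegral_enorm _).trans_lt (hfi P hP).integrableOn.2).ne
  have hfin₂ : ∀ s, MeasurableSet[c] s → ∫⁻ x in s, G₂ x ∂P ≠ ∞ := fun s hs => by
    rw [hG₂ P hP s hs]
    exact ((lintegral_ofReal_le_lintegral_enorm _).trans_lt (hfi P hP).neg.integrableOn.2).ne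
  have hint₁ : Integrable (fun x => (G₁ x).toReal) P := integrable_toReal_of_lintegral_ne_top
    hG₁m'.aemeasurable (by simpa using hfin₁ univ .univ)
  have hint₂ : Integrable (fun x => (G₂ x).toReal) P := integrable_toReal_of_lintegral_ne_top
    hG₂m'.aemeasurable (by simpa using hfin₂ univ .univ)
  refine ⟨hint₁.sub hint₂, fun s hs => ?_⟩
  rw [integral_sub hint₁.integrableOn hint₂.integrableOn,
    setIntegral_toReal_eq_toReal_setLIntegral hG₁m' (hfin₁ s hs),
    setIntegral_toReal_eq_toReal_setLIntegral hG₂m' (hfin₂ s hs), hG₁ P hP s hs, hG₂ P hP s hs,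
    integral_eq_lintegral_pos_part_sub_lintegral_neg_part (hfi P hP).integrableOn]
  rfl

theorem IsLSComplete.setIntegral_eq_zero {M : Set (Measure X)} (hc : c ≤ mX)
    (hfin : ∀ P ∈ M, IsFiniteMeasure P) (hcompl : IsLSComplete mX c M)
    (hsuff : IsLSSufficient mX c M) {f : X → ℝ} (hf : Measurable f)
    (hfi : ∀ P ∈ M, Integrable f P) (hzero : ∀ P ∈ M, ∫ x, f x ∂P = 0) {P : Measure X}
    (hP : P ∈ M) {s : Set X} (hs : MeasurableSet[c] s) : ∫ x in s, f x ∂P = 0 := by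
  obtain ⟨g, hgm, hg⟩ := HasCommonCondExp.of_integrable hc hfin hsuff hf hfi
  have hg0 : g =ᵐ[P] 0 := hcompl g hgm (fun P hP => (hg P hP).1)
    (fun P hP => by simpa [hzero P hP] using (hg P hP).2 univ .univ) P hP
  rw [← (hg P hP).2 s hs]
  exact integral_eq_zero_of_ae (ae_restrict_of_ae hg0)

theorem setIntegral_eq_zero_of_exhaustion {ι : Type*} {M : Set (Measure X)} (hc : c ≤ mX)
    (Q : ι → Set (Measure X)) (hexh : ⋃ η, Q η = M) (hfin : ∀ P ∈ M, IsFiniteMeasure P)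
    (hcompl : ∀ η, IsLSComplete mX c (Q η)) (hsuff : ∀ η, IsLSSufficient mX c (Q η))
    {f : X → ℝ} (hf : Measurable f) (hfi : ∀ P ∈ M, Integrable f P)
    (hzero : ∀ P ∈ M, ∫ x, f x ∂P = 0) {P : Measure X} (hP : P ∈ M) {s : Set X}
    (hs : MeasurableSet[c] s) : ∫ x in s, f x ∂P = 0 := by
  subst hexh
  obtain ⟨η, hPη⟩ := mem_iUnion.1 hP
  have hQ : ∀ P ∈ Q η, P ∈ ⋃ η, Q η := fun P => mem_iUnion_of_mem η
  exact (hcompl η).setIntegral_eq_zero hc (fun P h => hfin P (hQ P h)) (hsuff η) hf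
    (fun P h => hfi P (hQ P h)) (fun P h => hzero P (hQ P h)) hPη hs

theorem setIntegral_biInter_eq_zero_of_exhaustion {ι : Type*} {H : ι → Type*}
    {M : Set (Measure X)} (hfin : ∀ P ∈ M, IsFiniteMeasure P) {C : ι → MeasurableSpace X}
    (hle : ∀ i, C i ≤ mX) (Q : ∀ i, H i → Set (Measure X)) (hexh : ∀ i, ⋃ η, Q i η = M)
    (hcompl : ∀ i η, IsLSComplete mX (C i) (Q i η))
    (hsuff : ∀ i η, IsLSSufficient mX (C i) (Q i η)) {f : X → ℝ} (hf : Measurable f)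
    (hfi : ∀ P ∈ M, Integrable f P) (hzero : ∀ P ∈ M, ∫ x, f x ∂P = 0) (F : Finset ι)
    {s : ι → Set X} (hs : ∀ i ∈ F, MeasurableSet[C i] (s i)) {P : Measure X} (hP : P ∈ M) :
    ∫ x in ⋂ i ∈ F, s i, f x ∂P = 0 := by
  classical
  induction F using Finset.induction_on generalizing P with
  | empty => simpa using hzero P hP
  | insert a F _ IH =>
    have hsF : ∀ i ∈ F, MeasurableSet[C i] (s i) := fun i hi => hs i (F.mem_insert_of_mem hi)
    have hT : MeasurableSet (⋂ i ∈ F, s i) := F.measurableSet_biInter fun i hi => hle i _ (hsF i hi)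
    rw [Finset.set_biInter_insert, ← setIntegral_indicator hT]
    refine setIntegral_eq_zero_of_exhaustion (hle a) (Q a) (hexh a) hfin (hcompl a) (hsuff a)
      (hf.indicator hT) (fun P hP => (hfi P hP).indicator hT) (fun P hP => ?_) hP
      (hs a (F.mem_insert_self a))
    rw [integral_indicator hT]
    exact IH hsF hP

theorem ae_eq_zero_of_forall_setIntegral_eq_zero_of_isPiSystem (hc : c ≤ mX) {P : Measure X}
    [IsFiniteMeasure P] {S : Set (Set X)} (hgen : c = MeasurableSpace.generateFrom S)
    (hS : IsPiSystem S) {f : X → ℝ} (hf : Measurable[c] f) (hfi : Integrable f P)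
    (huniv : ∫ x, f x ∂P = 0) (hS0 : ∀ s ∈ S, ∫ x in s, f x ∂P = 0) : f =ᵐ[P] 0 := by
  have hall : ∀ t, MeasurableSet[c] t → ∫ x in t, f x ∂P = 0 := by
    intro t ht
    induction t, ht using MeasurableSpace.induction_on_inter hgen hS with
    | empty => simp
    | basic t ht => exact hS0 t ht
    | compl t ht iht => linarith [integral_add_compl (hc _ ht) hfi]
    | iUnion g hdisj hgm ihg =>
      rw [integral_iUnion (fun i => hc _ (hgm i)) hdisj hfi.integrableOn]
      simp [ihg]
  exact ae_eq_of_forall_setIntegral_eq_of_sigmaFinite' hc (fun s _ _ => hfi.integrableOn)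
    (fun s _ _ => integrableOn_zero) (fun s hs _ => by simpa using hall s hs)
    hf.stronglyMeasurable.aestronglyMeasurable aestronglyMeasurable_zero

end

theorem partially_complete_sufficient_jointly_complete_general
    {X : Type*} (mX : MeasurableSpace X) {I : Type*} {H : I → Type*}
    (M : Set (@Measure X mX)) (hprob : ∀ P ∈ M, IsProbabilityMeasure P)
    (C : I → MeasurableSpace X) (hle : ∀ i, C i ≤ mX)
    (Q : ∀ i, H i → Set (@Measure X mX))
    (hexh : ∀ i, (⋃ η, Q i η) = M)
    (hcompl : ∀ i η, IsLSComplete mX (C i) (Q i η))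
    (hsuff : ∀ i η, IsLSSufficient mX (C i) (Q i η)) :
    IsLSComplete mX (⨆ i, C i) M := by
  intro h hmeas hint hzero P hP
  have hfin : ∀ P ∈ M, IsFiniteMeasure P := fun P hP =>
    have := hprob P hP; inferInstance
  have := hfin P hP
  have hCle : (⨆ i, C i) ≤ mX := iSup_le hle
  refine ae_eq_zero_of_forall_setIntegral_eq_zero_of_isPiSystem hCle
    (by rw [generateFrom_piiUnionInter_measurableSet C univ, iSup_univ])
    (isPiSystem_piiUnionInter _ (fun i => @MeasurableSpace.isPiSystem_measurableSet X (C i)) univ)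
    hmeas (hint P hP) (hzero P hP) ?_
  rintro t ⟨F, -, s, hs, rfl⟩
  exact setIntegral_biInter_eq_zero_of_exhaustion hfin hle Q hexh hcompl hsuff
    (hmeas.mono hCle le_rfl) hint hzero F hs hP

/-- **Theorem (main).** If for each `i ∈ I` the sub-σ-algebra `C i` is complete and
sufficient for every member of an exhaustion `(Q i η : η ∈ H i)` of the model `M`,
then `⨆ i, C i` is complete for `M`. -/
theorem partially_complete_sufficient_jointly_complete
    {X : Type*} (mX : MeasurableSpace X) {I : Type*} {H : I → Type*}
    (M : Set (@Measure X mX)) (hprob : ∀ P ∈ M, IsProbabilityMeasure P)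
    (C : I → MeasurableSpace X) (hle : ∀ i, C i ≤ mX)
    (Q : ∀ i, H i → Set (@Measure X mX))
    (hsub : ∀ i η, Q i η ⊆ M)
    (hexh : ∀ i, (⋃ η, Q i η) = M)
    (hcompl : ∀ i η, IsLSComplete mX (C i) (Q i η))
    (hsuff : ∀ i η, IsLSSufficient mX (C i) (Q i η)) :
    IsLSComplete mX (⨆ i, C i) M :=
  partially_complete_sufficient_jointly_complete_general mX M hprob C hle Q hexh hcompl hsuff
end

section
/- Let Q = {Q_{θ₁} : θ₁ ∈ Θ₁} be a model on (X₁, A₁) and R = {R_{θ₁,θ₂}} on (X₂, A₂), and P := {Q_{θ₁} ⊗ R_{θ₁,θ₂} : θ₁ ∈ Θ₁, θ₂ ∈ Θ₂}. Assume: (i) Q is complete; (ii) for each θ₁, the family {R_{θ₁,θ₂} : θ₂ ∈ Θ₂} is complete; (iii) for each θ₂, the family {R_{θ₁,θ₂} : θ₁ ∈ Θ₁} is homogeneous (its members are mutually absolutely continuous); (iv) every function integrable with respect to all members of P is also integrable with respect to all Q_{θ₁} ⊗ R_{θ₁',θ₂} with θ₁ ≠ θ₁'. Then P is complete. -/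
open MeasureTheory

/-!
Let `h` be measurable, integrable and centred under every `Q θ₁ ⊗ R θ₁ θ₂`. By Fubini, the
marginal `y ↦ ∫ h(x, y) dQ θ₁` is centred under every `R θ₁ θ₂`, so by completeness of
`{R θ₁ θ₂ : θ₂}` it vanishes `R θ₁ θ₂`-a.e., and by homogeneity also `R θ₁' θ₂`-a.e. Hence, for a
measurable `t ⊆ X₂`, the partial integral `x ↦ ∫_t h(x, y) dR θ₁' θ₂` is centred under every
`Q θ₁`, so completeness of `Q` makes it vanish `Q θ₁'`-a.e. Then `h` integrates to zero over every measurable rectangle, hence over every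
measurable set, and so vanishes a.e.
-/

section

variable {X₁ X₂ : Type*} [mX₁ : MeasurableSpace X₁] [mX₂ : MeasurableSpace X₂]

theorem MeasureTheory.Integrable.ae_eq_zero_of_forall_setIntegral_prod_eq_zero
    {E : Type*} [NormedAddCommGroup E] [NormedSpace ℝ E] [CompleteSpace E]
    {μ : Measure (X₁ × X₂)} {h : X₁ × X₂ → E} (hh : Integrable h μ)
    (hrect : ∀ ⦃s : Set X₁⦄, MeasurableSet s → ∀ ⦃t : Set X₂⦄, MeasurableSet t →
      ∫ z in s ×ˢ t, h z ∂μ = 0) :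
    h =ᵐ[μ] 0 := by
  refine hh.ae_eq_zero_of_forall_setIntegral_eq_zero fun A hA _ => ?_
  refine MeasurableSpace.induction_on_inter (C := fun A _ => ∫ z in A, h z ∂μ = 0)
    generateFrom_prod.symm isPiSystem_prod (by simp) ?_ ?_ ?_ A hA
  · rintro _ ⟨s, hs, t, ht, rfl⟩
    exact hrect hs ht
  · intro t ht htzero
    have hzero : ∫ z, h z ∂μ = 0 := by simpa using hrect .univ .univ
    rwa [← integral_add_compl ht hh, htzero, zero_add] at hzero
  · intro f hfd hfm hfzero
    simp [integral_iUnion hfm hfd hh.integrableOn, hfzero]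

theorem MeasureTheory.Integrable.ae_eq_zero_of_forall_ae_setIntegral_eq_zero
    {E : Type*} [NormedAddCommGroup E] [NormedSpace ℝ E] [CompleteSpace E]
    {μ : Measure X₁} {ν : Measure X₂} [SFinite μ] [SFinite ν]
    {h : X₁ × X₂ → E} (hh : Integrable h (μ.prod ν))
    (hsection : ∀ t, MeasurableSet t → (fun x => ∫ y in t, h (x, y) ∂ν) =ᵐ[μ] 0) :
    h =ᵐ[μ.prod ν] 0 :=
  hh.ae_eq_zero_of_forall_setIntegral_prod_eq_zero fun s _ t ht => by
    rw [setIntegral_prod h hh.integrableOn,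
      integral_congr_ae (ae_restrict_of_ae (hsection t ht))]
    simp

theorem MeasureTheory.Integrable.prod_restrict_right {μ : Measure X₁} {ν : Measure X₂}
    [SFinite μ] [SFinite ν] {E : Type*} [NormedAddCommGroup E] {h : X₁ × X₂ → E}
    (hh : Integrable h (μ.prod ν)) (t : Set X₂) : Integrable h (μ.prod (ν.restrict t)) := by
  rw [← Measure.restrict_univ (μ := μ), Measure.prod_restrict]
  exact hh.restrict

namespace IsLSComplete

variable {Θ : Type*} {h : X₁ × X₂ → ℝ}

theorem ae_integral_fst_eq_zero {ν : Θ → Measure X₂} [∀ θ, SFinite (ν θ)]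
    (hν : IsLSComplete mX₂ mX₂ (Set.range ν)) (μ : Measure X₁) [SFinite μ] (hmeas : Measurable h)
    (hint : ∀ θ, Integrable h (μ.prod (ν θ))) (hzero : ∀ θ, ∫ z, h z ∂μ.prod (ν θ) = 0) (θ : Θ) :
    (fun y => ∫ x, h (x, y) ∂μ) =ᵐ[ν θ] 0 := by
  refine hν _ hmeas.stronglyMeasurable.integral_prod_left'.measurable ?_ ?_ _ ⟨θ, rfl⟩
  · rintro _ ⟨θ', rfl⟩
    exact (hint θ').integral_prod_right
  · rintro _ ⟨θ', rfl⟩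
    rw [← integral_prod_symm h (hint θ'), hzero]

theorem ae_integral_snd_eq_zero {μ : Θ → Measure X₁} [∀ θ, SFinite (μ θ)]
    (hμ : IsLSComplete mX₁ mX₁ (Set.range μ)) (ν : Measure X₂) [SFinite ν] (hmeas : Measurable h)
    (hint : ∀ θ, Integrable h ((μ θ).prod ν)) (hzero : ∀ θ, ∫ z, h z ∂(μ θ).prod ν = 0) (θ : Θ) :
    (fun x => ∫ y, h (x, y) ∂ν) =ᵐ[μ θ] 0 := by
  refine hμ _ hmeas.stronglyMeasurable.integral_prod_right'.measurable ?_ ?_ _ ⟨θ, rfl⟩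
  · rintro _ ⟨θ', rfl⟩
    exact (hint θ').integral_prod_left
  · rintro _ ⟨θ', rfl⟩
    rw [← integral_prod h (hint θ'), hzero]

end IsLSComplete

end

/-- **Theorem (essentially Cramer–Kamps–Schenk, 2002).** If `Q` is complete, each family
`{R θ₁ θ₂ : θ₂}` is complete, each family `{R θ₁ θ₂ : θ₁}` is homogeneous (mutually
absolutely continuous), and every function integrable for all members of the model
`{Q θ₁ ⊗ R θ₁ θ₂}` is integrable for all `Q θ₁ ⊗ R θ₁' θ₂`, then the model
`{Q θ₁ ⊗ R θ₁ θ₂ : θ₁ ∈ Θ₁, θ₂ ∈ Θ₂}` is complete. -/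
theorem cramer_kamps_schenk
    {X₁ X₂ : Type*} [mX₁ : MeasurableSpace X₁] [mX₂ : MeasurableSpace X₂]
    {Θ₁ Θ₂ : Type*}
    (Q : Θ₁ → Measure X₁) (R : Θ₁ → Θ₂ → Measure X₂)
    (hQ : ∀ θ₁, IsProbabilityMeasure (Q θ₁))
    (hR : ∀ θ₁ θ₂, IsProbabilityMeasure (R θ₁ θ₂))
    (hQcomplete : IsLSComplete mX₁ mX₁ (Set.range Q))
    (hRcomplete : ∀ θ₁, IsLSComplete mX₂ mX₂ (Set.range (R θ₁)))
    (hhom : ∀ θ₂ θ₁ θ₁', R θ₁ θ₂ ≪ R θ₁' θ₂)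
    (hint : ∀ h : X₁ × X₂ → ℝ,
      (∀ θ₁ θ₂, Integrable h ((Q θ₁).prod (R θ₁ θ₂))) →
      ∀ θ₁ θ₁' θ₂, Integrable h ((Q θ₁).prod (R θ₁' θ₂))) :
    IsLSComplete inferInstance inferInstance
      {P : Measure (X₁ × X₂) | ∃ θ₁ θ₂, P = (Q θ₁).prod (R θ₁ θ₂)} := by
  intro h hmeas hIntegrable hCentred
  have hInt : ∀ θ₁ θ₂, Integrable h ((Q θ₁).prod (R θ₁ θ₂)) :=
    fun θ₁ θ₂ => hIntegrable _ ⟨θ₁, θ₂, rfl⟩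
  have hZero : ∀ θ₁ θ₂, ∫ z, h z ∂(Q θ₁).prod (R θ₁ θ₂) = 0 :=
    fun θ₁ θ₂ => hCentred _ ⟨θ₁, θ₂, rfl⟩
  have hMarginal : ∀ θ₁ θ₂, (fun y => ∫ x, h (x, y) ∂Q θ₁) =ᵐ[R θ₁ θ₂] 0 := fun θ₁ =>
    (hRcomplete θ₁).ae_integral_fst_eq_zero (Q θ₁) hmeas (hInt θ₁) (hZero θ₁)
  rintro _ ⟨θ₁, θ₂, rfl⟩
  refine (hInt θ₁ θ₂).ae_eq_zero_of_forall_ae_setIntegral_eq_zero fun t _ => ?_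
  refine hQcomplete.ae_integral_snd_eq_zero ((R θ₁ θ₂).restrict t) hmeas
    (fun θ => (hint h hInt θ θ₁ θ₂).prod_restrict_right t) (fun θ => ?_) θ₁
  have hMarginal' := ae_restrict_of_ae (s := t) ((hhom θ₂ θ₁ θ).ae_le (hMarginal θ θ₂))
  rw [integral_prod_symm h ((hint h hInt θ θ₁ θ₂).prod_restrict_right t),
    integral_congr_ae hMarginal']
  simp
end

section
/- Let P be a homogeneous model on (X, A), I a set, and for each i ∈ I let C_i be a sub-σ-algebra and (P_{i,η} : η ∈ H_i) an exhaustion of P with C_i sufficient for each P_{i,η}. Assume the connectedness property: for any P', P'' ∈ P there exist n ∈ ℕ and P₁,…,P_n ∈ P with P₁ = P', P_n = P'', and for each k there exist i and η with P_k, P_{k+1} ∈ P_{i,η}. Then ⋁_{i∈I} C_i is sufficient for P. -/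
open MeasureTheory

/-!
Fix `P₀ ∈ M` and a version `g` of `P₀(A | ⨆ i, C i)`. If `P, P'` lie in a common submodel for
which `C i` is sufficient, then by the Halmos–Savage argument the density `dP'/dP` agrees a.e.
with a `C i`-measurable, hence `⨆ i, C i`-measurable, function, so every version of
`P(A | ⨆ i, C i)` is also one of `P'(A | ⨆ i, C i)`. Walking along a chain from `P₀` to any
`P ∈ M` shows that `g` serves for all of `M` at once.
-/

section CondExp

variable {α : Type*} {m m₀ : MeasurableSpace α} {μ : Measure α}

theorem integral_mul_condExp_of_stronglyMeasurable (hm : m ≤ m₀) [SigmaFinite (μ.trim hm)]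
    {f h : α → ℝ} (hh : StronglyMeasurable[m] h) (hhf : Integrable (h * f) μ)
    (hf : Integrable f μ) : ∫ x, h x * μ[f | m] x ∂μ = ∫ x, h x * f x ∂μ :=
  (integral_congr_ae (condExp_mul_of_stronglyMeasurable_left hh hhf hf).symm).trans
    (integral_condExp hm)

theorem ae_eq_condExp_of_measurable_of_forall_setIntegral_eq [IsFiniteMeasure μ] (hm : m ≤ m₀)
    {f g : α → ℝ} (hf : Integrable f μ) (hg : Measurable[m] g)
    (hgf : ∀ s, MeasurableSet[m] s → ∫ x in s, g x ∂μ = ∫ x in s, f x ∂μ) :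
    g =ᵐ[μ] μ[f | m] := by
  -- On the `m`-measurable sets `{|g| ≤ n}` the function `g` is bounded, hence integrable.
  set t : ℕ → Set α := fun n => {x | |g x| ≤ n}
  have ht : ∀ n, MeasurableSet[m] (t n) := fun n =>
    (continuous_abs.measurable.comp hg) measurableSet_Iic
  have htrunc : ∀ n, (t n).indicator g =ᵐ[μ] (t n).indicator (μ[f | m]) := by
    intro n
    have hgm : StronglyMeasurable[m] ((t n).indicator g) :=
      (hg.indicator (ht n)).stronglyMeasurable
    have hint : Integrable ((t n).indicator g) μ := by
      refine .of_bound (hgm.mono hm).aestronglyMeasurable n (ae_of_all _ fun x => ?_)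
      by_cases hx : x ∈ t n
      · simpa [hx] using (show |g x| ≤ n from hx)
      · simp [hx]
    calc (t n).indicator g =ᵐ[μ] μ[(t n).indicator f | m] := by
          refine ae_eq_condExp_of_forall_setIntegral_eq hm (hf.indicator (hm _ (ht n)))
            (fun s _ _ => hint.integrableOn) (fun s hs _ => ?_) hgm.aestronglyMeasurable
          rw [setIntegral_indicator (hm _ (ht n)), setIntegral_indicator (hm _ (ht n)),
            hgf _ (hs.inter (ht n))]
      _ =ᵐ[μ] (t n).indicator (μ[f | m]) := condExp_indicator hf (ht n)
  filter_upwards [ae_all_iff.2 htrunc] with x hx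
  obtain ⟨n, hn⟩ := exists_nat_ge |g x|
  simpa [t, hn] using hx n

end CondExp

section Sufficiency

variable {X : Type*} {C D mX : MeasurableSpace X} {P P' : Measure X} {A : Set X} {g : X → ℝ}

def IsCondProb (C : MeasurableSpace X) (P : @Measure X mX) (A : Set X) (g : X → ℝ) : Prop :=
  ∀ s, MeasurableSet[C] s → ∫ x in s, g x ∂P = (P (s ∩ A)).toReal

theorem norm_indicator_one_le (A : Set X) (x : X) : ‖A.indicator (1 : X → ℝ) x‖ ≤ 1 :=
  (norm_indicator_le_norm_self _ x).trans (by simp)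

theorem setIntegral_indicator_one (hA : MeasurableSet A) (s : Set X) :
    ∫ x in s, A.indicator (1 : X → ℝ) x ∂P = P.real (s ∩ A) := by
  rw [setIntegral_indicator hA, Pi.one_def, setIntegral_const, smul_eq_mul, mul_one]

theorem isCondProb_iff_ae_eq_condExp (hC : C ≤ mX) [IsFiniteMeasure P] (hA : MeasurableSet A)
    (hg : Measurable[C] g) : IsCondProb C P A g ↔ g =ᵐ[P] P[A.indicator (1 : X → ℝ) | C] := by
  have hA_int : Integrable (A.indicator 1) P := (integrable_const (1 : ℝ)).indicator hA
  refine ⟨fun h => ae_eq_condExp_of_measurable_of_forall_setIntegral_eq hC hA_int hg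
    fun s hs => by rw [h s hs, setIntegral_indicator_one hA]; rfl, fun h s hs => ?_⟩
  rw [setIntegral_congr_ae (hC s hs) (h.mono fun x hx _ => hx), setIntegral_condExp hC hA_int hs,
    setIntegral_indicator_one hA]
  rfl

theorem isCondProb_condExp (hC : C ≤ mX) [IsFiniteMeasure P] (hA : MeasurableSet A) :
    IsCondProb C P A (P[A.indicator (1 : X → ℝ) | C]) :=
  (isCondProb_iff_ae_eq_condExp hC hA stronglyMeasurable_condExp.measurable).2 .rfl

theorem IsLSSufficient.subset {M N : Set (Measure X)} (h : IsLSSufficient mX C N) (hMN : M ⊆ N) :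
    IsLSSufficient mX C M :=
  fun A hA => (h A hA).imp fun _ ⟨hg, hgN⟩ => ⟨hg, fun P hP => hgN P (hMN hP)⟩

theorem toReal_rnDeriv_ae_eq_condExp_of_isLSSufficient (hC : C ≤ mX) {μ ν : Measure X}
    [IsFiniteMeasure μ] [IsFiniteMeasure ν] (hνμ : ν ≪ μ) (hsuff : IsLSSufficient mX C {μ, ν}) :
    (fun x => (ν.rnDeriv μ x).toReal) =ᵐ[μ] μ[fun x => (ν.rnDeriv μ x).toReal | C] := by
  set ρ : X → ℝ := fun x => (ν.rnDeriv μ x).toReal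
  have hρ : Integrable ρ μ := Measure.integrable_toReal_rnDeriv
  refine ae_eq_of_forall_setIntegral_eq_of_sigmaFinite (fun s _ _ => hρ.integrableOn)
    (fun s _ _ => integrable_condExp.integrableOn) fun B hB _ => ?_
  obtain ⟨g, hg, hg_suff⟩ := hsuff B hB
  have hgμ : g =ᵐ[μ] μ[B.indicator (1 : X → ℝ) | C] :=
    (isCondProb_iff_ae_eq_condExp hC hB hg).1 (hg_suff μ (by simp))
  have hgν : ∫ x, g x ∂ν = (ν B).toReal := by
    have := hg_suff ν (by simp) Set.univ MeasurableSet.univ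
    rwa [setIntegral_univ, Set.univ_inter] at this
  have hB_bdd : ∀ᵐ x ∂μ, ‖μ[B.indicator (1 : X → ℝ) | C] x‖ ≤ 1 := by
    simpa only [Real.norm_eq_abs] using ae_bdd_abs_condExp_of_ae_bdd_abs (m := C)
      (ae_of_all μ fun x => by simpa only [Real.norm_eq_abs] using norm_indicator_one_le B x)
  symm
  calc ∫ x in B, μ[ρ | C] x ∂μ = ∫ x, μ[ρ | C] x * B.indicator 1 x ∂μ := by
        rw [← integral_indicator hB]
        congr 1 with x
        by_cases hx : x ∈ B <;> simp [hx]
    _ = ∫ x, μ[ρ | C] x * μ[B.indicator 1 | C] x ∂μ := by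
        refine (integral_mul_condExp_of_stronglyMeasurable hC stronglyMeasurable_condExp
          ?_ ((integrable_const (1 : ℝ)).indicator hB)).symm
        exact integrable_condExp.mul_bdd (measurable_one.indicator hB).aestronglyMeasurable
          (ae_of_all _ (norm_indicator_one_le B))
    _ = ∫ x, μ[B.indicator 1 | C] x * ρ x ∂μ := by
        simp_rw [mul_comm (μ[ρ | C] _)]
        exact integral_mul_condExp_of_stronglyMeasurable hC stronglyMeasurable_condExp
          (hρ.bdd_mul integrable_condExp.1 hB_bdd) hρ
    _ = ∫ x, ρ x * g x ∂μ := integral_congr_ae <| by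
        filter_upwards [hgμ] with x hx
        rw [hx, mul_comm]
    _ = ∫ x in B, ρ x ∂μ := by
        rw [integral_toReal_rnDeriv_mul hνμ, hgν, Measure.setIntegral_toReal_rnDeriv hνμ]
        rfl

theorem IsCondProb.of_rnDeriv_ae_eq_measurable (hD : D ≤ mX) [IsFiniteMeasure P]
    [IsFiniteMeasure P'] (hP'P : P' ≪ P) (hA : MeasurableSet A) {h : X → ℝ}
    (hg : Measurable[D] g) (hh : Measurable[D] h)
    (hρ : (fun x => (P'.rnDeriv P x).toReal) =ᵐ[P] h) (hgP : IsCondProb D P A g) :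
    IsCondProb D P' A g := by
  intro s hs
  have hgP' := (isCondProb_iff_ae_eq_condExp hD hA hg).1 hgP
  have hh_int : Integrable h P := Measure.integrable_toReal_rnDeriv.congr hρ
  calc ∫ x in s, g x ∂P' = ∫ x, (P'.rnDeriv P x).toReal * s.indicator g x ∂P := by
        rw [integral_toReal_rnDeriv_mul hP'P, integral_indicator (hD s hs)]
    _ = ∫ x, s.indicator h x * P[A.indicator 1 | D] x ∂P := integral_congr_ae <| by
        filter_upwards [hρ, hgP'] with x hxρ hxg
        by_cases hx : x ∈ s <;> simp [hx, hxρ, hxg]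
    _ = ∫ x, s.indicator h x * A.indicator 1 x ∂P := by
        exact integral_mul_condExp_of_stronglyMeasurable hD (hh.indicator hs).stronglyMeasurable
          ((hh_int.indicator (hD s hs)).mul_bdd (measurable_one.indicator hA).aestronglyMeasurable
            (ae_of_all _ (norm_indicator_one_le A))) ((integrable_const (1 : ℝ)).indicator hA)
    _ = ∫ x, (P'.rnDeriv P x).toReal * (s ∩ A).indicator 1 x ∂P := integral_congr_ae <| by
        filter_upwards [hρ] with x hxρ
        by_cases hx : x ∈ s <;> by_cases hxA : x ∈ A <;> simp [hx, hxA, hxρ]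
    _ = (P' (s ∩ A)).toReal := by
        rw [integral_toReal_rnDeriv_mul hP'P, integral_indicator_one ((hD s hs).inter hA)]
        rfl

theorem IsCondProb.of_isLSSufficient_of_le (hCD : C ≤ D) (hD : D ≤ mX) [IsFiniteMeasure P]
    [IsFiniteMeasure P'] (hP'P : P' ≪ P) (hsuff : IsLSSufficient mX C {P, P'})
    (hA : MeasurableSet A) (hg : Measurable[D] g) (hgP : IsCondProb D P A g) :
    IsCondProb D P' A g :=
  hgP.of_rnDeriv_ae_eq_measurable hD hP'P hA hg
    (stronglyMeasurable_condExp.measurable.mono hCD le_rfl)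
    (toReal_rnDeriv_ae_eq_condExp_of_isLSSufficient (hCD.trans hD) hP'P hsuff)

end Sufficiency

theorem jointly_sufficient_of_homogeneous_connected_general
    {X : Type*} (mX : MeasurableSpace X) {I : Type*} {H : I → Type*}
    (M : Set (@Measure X mX)) (hprob : ∀ P ∈ M, IsProbabilityMeasure P)
    (hhom : ∀ P ∈ M, ∀ P' ∈ M, P ≪ P')
    (C : I → MeasurableSpace X) (hle : ∀ i, C i ≤ mX)
    (Q : ∀ i, H i → Set (@Measure X mX))
    (hconn : ∀ P' ∈ M, ∀ P'' ∈ M, ∃ n : ℕ, ∃ chain : Fin (n + 1) → @Measure X mX,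
      chain 0 = P' ∧ chain (Fin.last n) = P'' ∧ (∀ k, chain k ∈ M) ∧
      ∀ k : Fin n, ∃ i, ∃ η : H i, chain k.castSucc ∈ Q i η ∧ chain k.succ ∈ Q i η)
    (hsuff : ∀ i η, IsLSSufficient mX (C i) (Q i η)) :
    IsLSSufficient mX (⨆ i, C i) M := by
  intro A hA
  obtain rfl | ⟨P₀, hP₀⟩ := M.eq_empty_or_nonempty
  · exact ⟨0, measurable_const, by simp⟩
  have hD : (⨆ i, C i) ≤ mX := iSup_le hle
  have := hprob P₀ hP₀
  obtain ⟨g, hg, hgP₀⟩ : ∃ g, Measurable[⨆ i, C i] g ∧ IsCondProb (⨆ i, C i) P₀ A g :=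
    ⟨_, stronglyMeasurable_condExp.measurable, isCondProb_condExp hD hA⟩
  refine ⟨g, hg, fun P hP => ?_⟩
  obtain ⟨n, chain, rfl, rfl, hmem, hstep⟩ := hconn P₀ hP₀ P hP
  suffices ∀ k, IsCondProb (⨆ i, C i) (chain k) A g from this (Fin.last n)
  intro k
  induction k using Fin.induction with
  | zero => exact hgP₀
  | succ k ih =>
    obtain ⟨i, η, hk, hk'⟩ := hstep k
    have := hprob _ (hmem k.castSucc)
    have := hprob _ (hmem k.succ)
    exact ih.of_isLSSufficient_of_le (le_iSup C i) hD (hhom _ (hmem _) _ (hmem _))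
      ((hsuff i η).subset (Set.pair_subset hk hk')) hA hg

/-- **Theorem (joint sufficiency under homogeneity and chain-connectedness).**
For a homogeneous model `M` with exhaustions `(Q i η : η ∈ H i)` such that any two
members of `M` are connected by a finite chain whose consecutive members lie in a
common submodel, if each `C i` is sufficient for every `Q i η`, then `⨆ i, C i`
is sufficient for `M`. -/
theorem jointly_sufficient_of_homogeneous_connected
    {X : Type*} (mX : MeasurableSpace X) {I : Type*} {H : I → Type*}
    (M : Set (@Measure X mX)) (hprob : ∀ P ∈ M, IsProbabilityMeasure P)
    (hhom : ∀ P ∈ M, ∀ P' ∈ M, P ≪ P')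
    (C : I → MeasurableSpace X) (hle : ∀ i, C i ≤ mX)
    (Q : ∀ i, H i → Set (@Measure X mX))
    (hsub : ∀ i η, Q i η ⊆ M)
    (hexh : ∀ i, (⋃ η, Q i η) = M)
    (hconn : ∀ P' ∈ M, ∀ P'' ∈ M, ∃ n : ℕ, ∃ chain : Fin (n + 1) → @Measure X mX,
      chain 0 = P' ∧ chain (Fin.last n) = P'' ∧ (∀ k, chain k ∈ M) ∧
      ∀ k : Fin n, ∃ i, ∃ η : H i, chain k.castSucc ∈ Q i η ∧ chain k.succ ∈ Q i η)
    (hsuff : ∀ i η, IsLSSufficient mX (C i) (Q i η)) :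
    IsLSSufficient mX (⨆ i, C i) M :=
  jointly_sufficient_of_homogeneous_connected_general mX M hprob hhom C hle Q hconn hsuff
end

section
/- Let P be a model on (X, A) and let E₀ := {h : X → ℝ measurable, integrable with respect to every P ∈ P, with ∫ h dP = 0 for all P ∈ P}. Define O := {A ∈ A : ∫_A h dP = 0 for all h ∈ E₀ and all P ∈ P}. Then O is a sub-σ-algebra of A and contains all sets that are null under every P ∈ P. -/
open MeasureTheory

/-- The 'optimal' σ-algebra of a model `M`, as a collection of sets: all measurable
sets `A` such that `∫_A h dP = 0` for every `P ∈ M` and every measurable `h` that is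
integrable with zero expectation under every member of `M`. -/
def optimalSets {X : Type*} (mX : MeasurableSpace X) (M : Set (@Measure X mX)) :
    Set (Set X) :=
  {A | MeasurableSet[mX] A ∧
    ∀ h : X → ℝ, Measurable[mX] h → (∀ P ∈ M, Integrable h P) →
      (∀ P ∈ M, ∫ x, h x ∂P = 0) → ∀ P ∈ M, ∫ x in A, h x ∂P = 0}

/-!
Writing `O` for `optimalSets mX M`: the set function `A ↦ ∫_A h dP` is countably additive, so `O`
is a Dynkin system. It is stable under intersections because for `A ∈ O` and a centred `h` the
function `1_A · h` is again centred, whence `∫_{A ∩ B} h dP = ∫_B 1_A · h dP = 0` for `B ∈ O`;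
a Dynkin system stable under intersections is a σ-algebra.
-/
open Function

namespace optimalSets

variable {X : Type*} {mX : MeasurableSpace X} {M : Set (Measure X)}

lemma empty_mem : ∅ ∈ optimalSets mX M :=
  ⟨MeasurableSet.empty, fun _ _ _ _ _ _ => setIntegral_empty⟩

lemma compl_mem {s : Set X} (hs : s ∈ optimalSets mX M) : sᶜ ∈ optimalSets mX M := by
  refine ⟨hs.1.compl, fun h hm hi hz P hP => ?_⟩
  have hsum := integral_add_compl hs.1 (hi P hP)
  rwa [hs.2 h hm hi hz P hP, hz P hP, zero_add] at hsum

lemma iUnion_mem_of_pairwise_disjoint {f : ℕ → Set X} (hdisj : Pairwise (Disjoint on f))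
    (hf : ∀ n, f n ∈ optimalSets mX M) : (⋃ n, f n) ∈ optimalSets mX M := by
  refine ⟨MeasurableSet.iUnion fun n => (hf n).1, fun h hm hi hz P hP => ?_⟩
  rw [integral_iUnion (fun n => (hf n).1) hdisj (hi P hP).integrableOn]
  simp only [fun n => (hf n).2 h hm hi hz P hP, tsum_zero]

lemma inter_mem {s t : Set X} (hs : s ∈ optimalSets mX M) (ht : t ∈ optimalSets mX M) :
    s ∩ t ∈ optimalSets mX M := by
  refine ⟨hs.1.inter ht.1, fun h hm hi hz P hP => ?_⟩
  have hcentred : ∀ Q ∈ M, ∫ x, t.indicator h x ∂Q = 0 := fun Q hQ => by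
    rw [integral_indicator ht.1]
    exact ht.2 h hm hi hz Q hQ
  have key := hs.2 (t.indicator h) (hm.indicator ht.1)
    (fun Q hQ => (hi Q hQ).indicator ht.1) hcentred P hP
  rwa [setIntegral_indicator ht.1] at key

lemma mem_of_null {N : Set X} (hN : MeasurableSet N) (hnull : ∀ P ∈ M, P N = 0) :
    N ∈ optimalSets mX M :=
  ⟨hN, fun _ _ _ _ P hP => by
    rw [Measure.restrict_eq_zero.2 (hnull P hP), integral_zero_measure]⟩

variable (mX M) in
def dynkinSystem : MeasurableSpace.DynkinSystem X where
  Has := (· ∈ optimalSets mX M)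
  has_empty := empty_mem
  has_compl := compl_mem
  has_iUnion_nat := iUnion_mem_of_pairwise_disjoint

variable (mX M) in
abbrev measurableSpace : MeasurableSpace X :=
  (dynkinSystem mX M).toMeasurableSpace fun _ _ => inter_mem

lemma measurableSet_measurableSpace_iff {s : Set X} :
    MeasurableSet[measurableSpace mX M] s ↔ s ∈ optimalSets mX M :=
  Iff.rfl

end optimalSets

theorem optimalSets_is_sigma_algebra_and_contains_null_sets_general
    {X : Type*} (mX : MeasurableSpace X) (M : Set (@Measure X mX)) :
    Set.univ ∈ optimalSets mX M ∧
      (∀ s ∈ optimalSets mX M, sᶜ ∈ optimalSets mX M) ∧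
      (∀ f : ℕ → Set X, (∀ n, f n ∈ optimalSets mX M) →
        (⋃ n, f n) ∈ optimalSets mX M) ∧
      (∀ N : Set X, MeasurableSet[mX] N → (∀ P ∈ M, P N = 0) →
        N ∈ optimalSets mX M) := by
  simp only [← optimalSets.measurableSet_measurableSpace_iff]
  exact ⟨MeasurableSet.univ, fun _ hs => hs.compl, fun _ hf => .iUnion hf,
    fun _ hN hnull => optimalSets.mem_of_null hN hnull⟩

/-- **Theorem.** The collection `optimalSets mX M` is a sub-σ-algebra of `mX`
(contains `univ`, is closed under complements and countable unions) and contains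
every set that is null under every `P ∈ M`. -/
theorem optimalSets_is_sigma_algebra_and_contains_null_sets
    {X : Type*} (mX : MeasurableSpace X) (M : Set (@Measure X mX))
    (hprob : ∀ P ∈ M, IsProbabilityMeasure P) :
    Set.univ ∈ optimalSets mX M ∧
      (∀ s ∈ optimalSets mX M, sᶜ ∈ optimalSets mX M) ∧
      (∀ f : ℕ → Set X, (∀ n, f n ∈ optimalSets mX M) →
        (⋃ n, f n) ∈ optimalSets mX M) ∧
      (∀ N : Set X, MeasurableSet[mX] N → (∀ P ∈ M, P N = 0) →
        N ∈ optimalSets mX M) :=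
  optimalSets_is_sigma_algebra_and_contains_null_sets_general mX M
end

section
/- Let P be a model on (X, A), O its optimal σ-algebra, and C a sufficient sub-σ-algebra for P. Then O ⊆ C up to P-null sets: for every A ∈ O there exists C ∈ C with P(A Δ C) = 0 for all P ∈ P. -/
open MeasureTheory

/-! Let `g` be the common version of `P(A | C)` given by sufficiency. Testing `g` on
`C`-sets shows `0 ≤ g ≤ 1` and `∫ g dP = P(A)` for every `P`, so `1_A - g` is an unbiased
estimator of zero. Optimality of `A` then gives `∫_A g dP = P(A) = ∫ g dP`, and for a
function with values in `[0, 1]` this forces `g = 1_A` almost surely: the `C`-set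
`{g = 1}` agrees with `A` up to a null set. This is Rao–Blackwellization of `1_A`. -/

open Set

section

variable {α : Type*} {m m0 : MeasurableSpace α} {μ : Measure α}

theorem ae_nonneg_of_forall_integrableOn_setIntegral_nonneg_s8 (hm : m ≤ m0) [IsFiniteMeasure μ]
    {f : α → ℝ} (hf : Measurable[m] f)
    (hf_nonneg : ∀ s, MeasurableSet[m] s → IntegrableOn f s μ → 0 ≤ ∫ x in s, f x ∂μ) :
    0 ≤ᵐ[μ] f := by
  -- `f` need not be integrable, so test it on the slices `-n ≤ f < 0`, where it is bounded.
  have slice_null (n : ℕ) : μ (f ⁻¹' Ico (-n) 0) = 0 := by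
    set t := f ⁻¹' Ico (-(n : ℝ)) 0
    have ht : MeasurableSet[m] t := hf measurableSet_Ico
    have hint : IntegrableOn f t μ := by
      refine Measure.integrableOn_of_bounded (M := n) (measure_ne_top μ t)
        (hf.mono hm le_rfl).aestronglyMeasurable ((ae_restrict_iff' (hm t ht)).2 ?_)
      filter_upwards with x ⟨hlo, hhi⟩
      rw [Real.norm_eq_abs, abs_le]
      constructor <;> linarith
    by_contra hμt
    have hpos : 0 < ∫ x in t, -f x ∂μ := by
      refine (setIntegral_pos_iff_support_of_nonneg_ae ?_ hint.neg).2 ?_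
      · filter_upwards [ae_restrict_mem (hm t ht)] with x hx using neg_nonneg.2 hx.2.le
      · have hsupp : t ⊆ Function.support (-f) := fun x hx => neg_ne_zero.2 hx.2.ne
        rwa [inter_eq_self_of_subset_right hsupp, pos_iff_ne_zero]
    rw [integral_neg] at hpos
    linarith [hf_nonneg t ht hint]
  have hneg : {x | f x < 0} ⊆ ⋃ n : ℕ, f ⁻¹' Ico (-n) 0 := fun x hx =>
    mem_iUnion.2 ⟨⌈-f x⌉₊, by linarith [Nat.le_ceil (-f x)], hx⟩
  refine ae_iff.2 (measure_mono_null (fun x hx => hneg ?_) (measure_iUnion_null slice_null))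
  simpa using hx

end

section

variable {α : Type*} {m m0 : MeasurableSpace α} {μ : Measure α} [IsFiniteMeasure μ]
  {A : Set α} {g : α → ℝ}

theorem ae_mem_Icc_of_forall_setIntegral_eq_measureReal_inter (hm : m ≤ m0)
    (hg : Measurable[m] g)
    (hgA : ∀ s, MeasurableSet[m] s → ∫ x in s, g x ∂μ = μ.real (s ∩ A)) :
    ∀ᵐ x ∂μ, g x ∈ Icc 0 1 := by
  have hg_nonneg : 0 ≤ᵐ[μ] g :=
    ae_nonneg_of_forall_integrableOn_setIntegral_nonneg_s8 hm hg fun s hs _ =>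
      (hgA s hs).symm ▸ measureReal_nonneg
  have hg_le_one : 0 ≤ᵐ[μ] fun x => 1 - g x := by
    refine ae_nonneg_of_forall_integrableOn_setIntegral_nonneg_s8 hm (measurable_const.sub hg)
      fun s hs hint => ?_
    have hone : IntegrableOn (fun _ => (1 : ℝ)) s μ := integrableOn_const (measure_ne_top μ s)
    have hgs : IntegrableOn g s μ := (hone.sub hint).congr_fun (fun x _ => by simp) (hm s hs)
    rw [integral_sub hone hgs, setIntegral_const, hgA s hs, smul_eq_mul, mul_one, sub_nonneg]
    exact measureReal_mono inter_subset_left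
  filter_upwards [hg_nonneg, hg_le_one] with x h0 h1
  exact ⟨h0, sub_nonneg.1 h1⟩

theorem integrable_of_ae_mem_Icc (hg : AEStronglyMeasurable g μ)
    (hg01 : ∀ᵐ x ∂μ, g x ∈ Icc 0 1) : Integrable g μ :=
  (integrable_const (1 : ℝ)).mono' hg <| by
    filter_upwards [hg01] with x hx
    rw [Real.norm_eq_abs, abs_le]
    exact ⟨by linarith [hx.1], hx.2⟩

theorem ae_eq_indicator_one_of_setIntegral_eq_integral (hA : MeasurableSet A)
    (hg_int : Integrable g μ) (hg01 : ∀ᵐ x ∂μ, g x ∈ Icc 0 1)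
    (hgA : ∫ x in A, g x ∂μ = μ.real A) (hg : ∫ x, g x ∂μ = μ.real A) :
    g =ᵐ[μ] A.indicator 1 := by
  have hgA_int : Integrable (A.indicator g) μ := hg_int.indicator hA
  have hA_int : ∫ x, A.indicator g x ∂μ = μ.real A := by rwa [integral_indicator hA]
  have on_A : A.indicator g =ᵐ[μ] A.indicator 1 := by
    refine (integral_eq_iff_of_ae_le hgA_int ((integrable_const 1).indicator hA) ?_).1 ?_
    · filter_upwards [hg01] with x hx
      exact indicator_le_indicator hx.2
    · rw [hA_int, integral_indicator_one hA]
  have off_A : A.indicator g =ᵐ[μ] g := by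
    refine (integral_eq_iff_of_ae_le hgA_int hg_int ?_).1 (hA_int.trans hg.symm)
    filter_upwards [hg01] with x hx
    exact indicator_apply_le' (fun _ => le_rfl) fun _ => hx.1
  exact off_A.symm.trans on_A

end

theorem setIntegral_eq_measureReal_of_mem_optimalSets {X : Type*} {mX : MeasurableSpace X}
    {M : Set (Measure X)} (hfin : ∀ P ∈ M, IsFiniteMeasure P) {A : Set X}
    (hA : A ∈ optimalSets mX M) {g : X → ℝ} (hg : Measurable g)
    (hg_int : ∀ P ∈ M, Integrable g P) (hg_mean : ∀ P ∈ M, ∫ x, g x ∂P = P.real A) :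
    ∀ P ∈ M, ∫ x in A, g x ∂P = P.real A := by
  obtain ⟨hA_meas, hA_opt⟩ := hA
  have hind_int (P : Measure X) (hP : P ∈ M) : Integrable (A.indicator 1) P :=
    have := hfin P hP; (integrable_const (1 : ℝ)).indicator hA_meas
  have hdiff_mean (P : Measure X) (hP : P ∈ M) :
      ∫ x, (A.indicator 1 - g : X → ℝ) x ∂P = 0 := by
    rw [integral_sub' (hind_int P hP) (hg_int P hP), integral_indicator_one hA_meas,
      hg_mean P hP, sub_self]
  intro P hP
  have hdiff_A := hA_opt _ ((measurable_one.indicator hA_meas).sub hg)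
    (fun P hP => (hind_int P hP).sub (hg_int P hP)) hdiff_mean P hP
  rw [integral_sub' (hind_int P hP).integrableOn (hg_int P hP).integrableOn,
    setIntegral_indicator hA_meas, inter_self, Pi.one_def, setIntegral_const, smul_eq_mul,
    mul_one] at hdiff_A
  linarith

/-- **Theorem.** If `C` is sufficient for `M`, then the optimal σ-algebra is contained
in `C` up to `M`-null sets: every `A ∈ optimalSets mX M` agrees with some
`C`-measurable set up to a set that is null under every `P ∈ M`. -/
theorem optimal_sigma_algebra_subset_sufficient
    {X : Type*} (mX : MeasurableSpace X) (M : Set (@Measure X mX))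
    (hprob : ∀ P ∈ M, IsProbabilityMeasure P)
    (C : MeasurableSpace X) (hle : C ≤ mX) (hsuff : IsLSSufficient mX C M) :
    ∀ A ∈ optimalSets mX M,
      ∃ t : Set X, MeasurableSet[C] t ∧ ∀ P ∈ M, P (symmDiff A t) = 0 := by
  intro A hA
  obtain ⟨g, hgC, hgA⟩ := hsuff A hA.1
  have hg : Measurable[mX] g := hgC.mono hle le_rfl
  have hfin : ∀ P ∈ M, IsFiniteMeasure P := fun P hP => by
    have := hprob P hP; infer_instance
  have hg01 : ∀ P ∈ M, ∀ᵐ x ∂P, g x ∈ Icc 0 1 := fun P hP =>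
    have := hfin P hP; ae_mem_Icc_of_forall_setIntegral_eq_measureReal_inter hle hgC (hgA P hP)
  have hg_int : ∀ P ∈ M, Integrable g P := fun P hP =>
    have := hfin P hP; integrable_of_ae_mem_Icc hg.aestronglyMeasurable (hg01 P hP)
  have hg_mean : ∀ P ∈ M, ∫ x, g x ∂P = P.real A := fun P hP => by
    simpa [measureReal_def] using hgA P hP univ MeasurableSet.univ
  have hgA_opt := setIntegral_eq_measureReal_of_mem_optimalSets hfin hA hg hg_int hg_mean
  refine ⟨{x | g x = 1}, hgC (measurableSet_singleton 1), fun P hP => ?_⟩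
  have := hfin P hP
  have hg_ind : g =ᵐ[P] A.indicator 1 := ae_eq_indicator_one_of_setIntegral_eq_integral hA.1
    (hg_int P hP) (hg01 P hP) (hgA_opt P hP) (hg_mean P hP)
  refine measure_symmDiff_eq_zero_iff.2 ?_
  filter_upwards [hg_ind] with x hx
  change (x ∈ A) = (g x = 1)
  by_cases hxA : x ∈ A <;> simp [hx, hxA]
end

section
/- Let (X, A, μ) be a measure space, E ⊆ A a collection of measurable sets, n ∈ ℕ, and consider the model P := {μ(·|E)^{⊗n} : E ∈ E, 0 < μ(E) < ∞} of n-fold products of conditional laws, on (Xⁿ, A^{⊗n}). Let C := σ(Eⁿ : E ∈ E) be the σ-algebra on Xⁿ generated by the n-fold products of members of E. If μ is σ-finite then C is sufficient for P. -/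
/-!
Pick countably many of the sets `Eⁿ` whose union `U` contains every `Eⁿ` up to a
`μ^{⊗n}`-null set; σ-finiteness of `μ^{⊗n}` is what makes such a countable subfamily exist.
Then `μ^{⊗n}` restricted to `U` stays σ-finite on the coarse σ-algebra `C`, so the
Radon–Nikodym derivative, on `C`, of `μ^{⊗n}(· ∩ U ∩ A)` with respect to `μ^{⊗n}(· ∩ U)` is a
`C`-measurable conditional probability of `A`. Since every `Eⁿ` lies in `C` and
`μ(·|E)^{⊗n} = μ^{⊗n}(·|Eⁿ)`, this one function serves every member of the model.
-/

open MeasureTheory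

/-- The conditional law `μ(·|E) = μ(· ∩ E)/μ(E)`. -/
noncomputable def condLaw {X : Type*} [mX : MeasurableSpace X] (μ : Measure X)
    (E : Set X) : Measure X :=
  (μ E)⁻¹ • μ.restrict E

open Set
open scoped ENNReal

section ConditionalLaw

variable {Y : Type*} [MeasurableSpace Y]

theorem condLaw_apply (ν : Measure Y) (B : Set Y) {s : Set Y} (hs : MeasurableSet s) :
    condLaw ν B s = (ν B)⁻¹ * ν (s ∩ B) := by
  rw [condLaw, Measure.smul_apply, Measure.restrict_apply hs, smul_eq_mul]

theorem isProbabilityMeasure_condLaw (ν : Measure Y) {B : Set Y} (h0 : ν B ≠ 0)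
    (htop : ν B ≠ ∞) : IsProbabilityMeasure (condLaw ν B) :=
  ⟨by rw [condLaw_apply ν B MeasurableSet.univ, univ_inter, ENNReal.inv_mul_cancel h0 htop]⟩

theorem condLaw_restrict_of_ae_subset (ν : Measure Y) {B U : Set Y} (hB : MeasurableSet B)
    (hBU : B ≤ᵐ[ν] U) : condLaw (ν.restrict U) B = condLaw ν B := by
  have hBU' : (B ∩ U : Set Y) =ᵐ[ν] B := Filter.inter_eventuallyEq_left.mpr hBU
  rw [condLaw, condLaw, Measure.restrict_apply hB, measure_congr hBU',
    Measure.restrict_restrict hB, Measure.restrict_congr_set hBU']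

theorem pi_condLaw {ι : Type*} [Fintype ι] {X : ι → Type*} [∀ i, MeasurableSpace (X i)]
    (μ : ∀ i, Measure (X i)) [∀ i, SigmaFinite (μ i)] {E : ∀ i, Set (X i)}
    (h0 : ∀ i, μ i (E i) ≠ 0) (htop : ∀ i, μ i (E i) ≠ ∞) :
    Measure.pi (fun i => condLaw (μ i) (E i)) = condLaw (Measure.pi μ) (univ.pi E) := by
  have := fun i => isProbabilityMeasure_condLaw (μ i) (h0 i) (htop i)
  refine Measure.pi_eq fun s hs => ?_
  rw [condLaw_apply _ _ (MeasurableSet.univ_pi hs), ← pi_inter_distrib, Measure.pi_pi,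
    Measure.pi_pi, ENNReal.prod_inv_distrib fun i _ j _ _ => Or.inr (htop j), ← Finset.prod_mul_distrib]
  exact Finset.prod_congr rfl fun i _ => (condLaw_apply _ _ (hs i)).symm

end ConditionalLaw

section Sufficiency

variable {Y : Type*} {C mY : MeasurableSpace Y}

theorem IsLSSufficient.mono {M M' : Set (Measure Y)} (h : IsLSSufficient mY C M)
    (hM : M' ⊆ M) : IsLSSufficient mY C M' := fun A hA =>
  let ⟨g, hg, hgM⟩ := h A hA
  ⟨g, hg, fun P hP => hgM P (hM hP)⟩

theorem isLSSufficient_singleton_of_sigmaFinite_trim (hC : C ≤ mY) (ν : Measure Y)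
    [SigmaFinite (ν.trim hC)] : IsLSSufficient mY C {ν} := by
  intro A _
  set κ : Measure[C] Y := (ν.restrict A).trim hC
  have hκ : κ ≤ ν.trim hC := (Measure.le_iff).2 fun s hs => by
    rw [trim_measurableSet_eq hC hs, trim_measurableSet_eq hC hs]
    exact Measure.restrict_apply_le A s
  have : SigmaFinite κ := Measure.sigmaFinite_of_le _ hκ
  set r := κ.rnDeriv (ν.trim hC)
  have hr : Measurable[C] r := Measure.measurable_rnDeriv _ _
  have hr_lt_top : ∀ᵐ x ∂ν, r x < ∞ := ae_of_ae_trim hC (Measure.rnDeriv_lt_top _ _)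
  refine ⟨fun x => (r x).toReal, hr.ennreal_toReal, ?_⟩
  intro P hP s hs
  rw [mem_singleton_iff.1 hP]
  calc ∫ x in s, (r x).toReal ∂ν = (∫⁻ x in s, r x ∂ν).toReal :=
        integral_toReal (hr.mono hC le_rfl).aemeasurable (ae_restrict_of_ae hr_lt_top)
    _ = (κ s).toReal := by
        rw [← setLIntegral_trim hC hr hs, Measure.setLIntegral_rnDeriv hκ.absolutelyContinuous]
    _ = (ν (s ∩ A)).toReal := by
        rw [trim_measurableSet_eq hC hs, Measure.restrict_apply (hC s hs)]

theorem IsLSSufficient.condLaw_image (hC : C ≤ mY) {ν : Measure Y}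
    (h : IsLSSufficient mY C {ν}) {𝓑 : Set (Set Y)} (h𝓑 : ∀ B ∈ 𝓑, MeasurableSet[C] B) :
    IsLSSufficient mY C (condLaw ν '' 𝓑) := by
  intro A hA
  obtain ⟨g, hg, hgν⟩ := h A hA
  refine ⟨g, hg, ?_⟩
  rintro _ ⟨B, hB, rfl⟩ s hs
  calc ∫ x in s, g x ∂condLaw ν B = (ν B)⁻¹.toReal * ∫ x in s ∩ B, g x ∂ν := by
        rw [condLaw, Measure.restrict_smul, integral_smul_measure,
          Measure.restrict_restrict (hC s hs), smul_eq_mul]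
    _ = (ν B)⁻¹.toReal * (ν (s ∩ B ∩ A)).toReal := by
        rw [hgν ν rfl _ (hs.inter (h𝓑 B hB))]
    _ = (condLaw ν B (s ∩ A)).toReal := by
        rw [condLaw_apply ν B ((hC s hs).inter hA), ENNReal.toReal_mul, inter_right_comm]

theorem sigmaFinite_trim_restrict_sUnion (hC : C ≤ mY) (ν : Measure Y) {D : Set (Set Y)}
    (hD : D.Countable) (hDC : ∀ B ∈ D, MeasurableSet[C] B) (hDfin : ∀ B ∈ D, ν B ≠ ∞) :
    SigmaFinite ((ν.restrict (⋃₀ D)).trim hC) := by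
  have hU : MeasurableSet[C] (⋃₀ D) := MeasurableSet.sUnion hD hDC
  refine Measure.sigmaFinite_of_countable (hD.insert (⋃₀ D)ᶜ) ?_
    (by rw [sUnion_insert, compl_union_self])
  rintro s (rfl | hs)
  · rw [trim_measurableSet_eq hC hU.compl, Measure.restrict_apply (hC _ hU.compl),
      compl_inter_self, measure_empty]
    exact ENNReal.zero_lt_top
  · rw [trim_measurableSet_eq hC (hDC s hs)]
    exact (Measure.restrict_apply_le _ _).trans_lt (hDfin s hs).lt_top

theorem isLSSufficient_condLaw_image (hC : C ≤ mY) (ν : Measure Y) [SFinite ν]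
    {𝓑 : Set (Set Y)} (h𝓑C : ∀ B ∈ 𝓑, MeasurableSet[C] B) (h𝓑 : ∀ B ∈ 𝓑, ν B ≠ ∞) :
    IsLSSufficient mY C (condLaw ν '' 𝓑) := by
  obtain ⟨D, hD𝓑, hD, h𝓑D⟩ :=
    Measure.exists_ae_subset_biUnion_countable ν fun B hB => hC _ (h𝓑C B hB)
  have := sigmaFinite_trim_restrict_sUnion hC ν hD (fun B hB => h𝓑C B (hD𝓑 hB))
    fun B hB => h𝓑 B (hD𝓑 hB)
  have hcondLaw : condLaw (ν.restrict (⋃₀ D)) '' 𝓑 = condLaw ν '' 𝓑 :=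
    image_congr fun B hB => condLaw_restrict_of_ae_subset ν (hC _ (h𝓑C B hB)) (h𝓑D B hB)
  rw [← hcondLaw]
  exact (isLSSufficient_singleton_of_sigmaFinite_trim hC _).condLaw_image hC h𝓑C

end Sufficiency

/-- **Lemma (sufficiency part).** If `μ` is σ-finite, then the σ-algebra generated on
`Xⁿ` by the products `Eⁿ`, `E ∈ ℰ`, is sufficient for the model of `n`-fold products
of the conditional laws `μ(·|E)`, `E ∈ ℰ`, `0 < μ(E) < ∞`. -/
theorem products_generate_sufficient_for_conditional_laws
    {X : Type*} [mX : MeasurableSpace X] (μ : Measure X) [SigmaFinite μ]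
    (ℰ : Set (Set X)) (hℰ : ∀ E ∈ ℰ, MeasurableSet E) (n : ℕ) :
    IsLSSufficient MeasurableSpace.pi
      (MeasurableSpace.generateFrom
        {s : Set (Fin n → X) | ∃ E ∈ ℰ, s = Set.univ.pi fun _ : Fin n => E})
      {P : Measure (Fin n → X) | ∃ E ∈ ℰ, 0 < μ E ∧ μ E < ⊤ ∧
        P = Measure.pi fun _ : Fin n => condLaw μ E} := by
  have hC : MeasurableSpace.generateFrom
      {s : Set (Fin n → X) | ∃ E ∈ ℰ, s = univ.pi fun _ : Fin n => E} ≤ MeasurableSpace.pi :=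
    MeasurableSpace.generateFrom_le <| by
      rintro _ ⟨E, hE, rfl⟩
      exact .univ_pi fun _ => hℰ E hE
  refine (isLSSufficient_condLaw_image hC (Measure.pi fun _ : Fin n => μ)
    (𝓑 := (fun E => univ.pi fun _ : Fin n => E) '' {E | E ∈ ℰ ∧ μ E < ⊤}) ?_ ?_).mono ?_
  · rintro _ ⟨E, ⟨hE, -⟩, rfl⟩
    exact MeasurableSpace.measurableSet_generateFrom ⟨E, hE, rfl⟩
  · rintro _ ⟨E, ⟨-, hEtop⟩, rfl⟩
    rw [Measure.pi_pi, Finset.prod_const]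
    exact ENNReal.pow_ne_top hEtop.ne
  · rintro _ ⟨E, hE, h0, htop, rfl⟩
    exact ⟨_, ⟨E, ⟨hE, htop⟩, rfl⟩, (pi_condLaw _ (fun _ => h0.ne') fun _ => htop.ne).symm⟩
end

section
/- Let (X, A, μ) be a measure space, E ⊆ A closed under finite intersections, n ∈ ℕ, and P := {μ(·|E)^{⊗n} : E ∈ E, 0 < μ(E) < ∞}. Then C := σ(Eⁿ : E ∈ E) is complete for P: every C-measurable function h on Xⁿ, integrable under each member of P with expectation zero under each member, vanishes P-a.s. for every P ∈ P. -/
open MeasureTheory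

/-! Since `ℰ` is `∩`-stable, restricting `μ(·|E)^⊗n` to a generator `Fⁿ` gives a constant
multiple of `μ(·|E ∩ F)^⊗n` (or zero), so every `h` with vanishing expectations also has vanishing
integral over every generator. Dynkin's π-λ theorem spreads this to all of `C`, and a
`C`-measurable integrable function whose integrals over all sets of `C` vanish is zero a.e. -/

open scoped NNReal ENNReal

section PiSystem

variable {α E : Type*} [NormedAddCommGroup E] [NormedSpace ℝ E] {m m0 : MeasurableSpace α}
  {μ : Measure[m0] α} {S : Set (Set α)} {f : α → E}

theorem setIntegral_eq_zero_of_isPiSystem (hm : m ≤ m0) (h_eq : m = MeasurableSpace.generateFrom S)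
    (h_inter : IsPiSystem S) (hf : Integrable f μ) (h_univ : ∫ x, f x ∂μ = 0)
    (basic : ∀ t ∈ S, ∫ x in t, f x ∂μ = 0) (t : Set α) (ht : MeasurableSet[m] t) :
    ∫ x in t, f x ∂μ = 0 := by
  induction t, ht using MeasurableSpace.induction_on_inter h_eq h_inter with
  | empty => simp
  | basic t ht => exact basic t ht
  | compl t ht ih => rw [← h_univ, ← integral_add_compl (hm t ht) hf, ih, zero_add]
  | iUnion s hdisj hs ih =>
    rw [integral_iUnion (fun i => hm _ (hs i)) hdisj hf.integrableOn]
    simp [ih]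

theorem ae_eq_zero_of_isPiSystem [CompleteSpace E] [IsFiniteMeasure μ] (hm : m ≤ m0)
    (h_eq : m = MeasurableSpace.generateFrom S) (h_inter : IsPiSystem S) (hf : Integrable f μ)
    (hfm : StronglyMeasurable[m] f) (h_univ : ∫ x, f x ∂μ = 0)
    (basic : ∀ t ∈ S, ∫ x in t, f x ∂μ = 0) : f =ᵐ[μ] 0 :=
  ae_eq_of_forall_setIntegral_eq_of_sigmaFinite' hm (fun _ _ _ => hf.integrableOn)
    (fun _ _ _ => integrableOn_zero)
    (fun t ht _ => by
      rw [setIntegral_eq_zero_of_isPiSystem hm h_eq h_inter hf h_univ basic t ht]; simp)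
    hfm.aestronglyMeasurable stronglyMeasurable_zero.aestronglyMeasurable

end PiSystem

theorem MeasureTheory.Measure.pi_const_smul {ι α : Type*} [Fintype ι] [MeasurableSpace α]
    (Q : Measure α) [SigmaFinite Q] (c : ℝ≥0) :
    Measure.pi (fun _ : ι => c • Q) = c ^ Fintype.card ι • Measure.pi fun _ : ι => Q := by
  refine Measure.pi_eq fun s hs => ?_
  rw [Measure.smul_apply, Measure.pi_pi]
  simp only [Measure.smul_apply, ENNReal.smul_def, smul_eq_mul, Finset.prod_mul_distrib,
    Finset.prod_const, Finset.card_univ, ENNReal.coe_pow]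

section CondLaw

variable {X : Type*} [MeasurableSpace X] {μ : Measure X} {E F : Set X}

theorem isProbabilityMeasure_condLaw_s11 (h0 : μ E ≠ 0) (htop : μ E ≠ ∞) :
    IsProbabilityMeasure (condLaw μ E) :=
  ⟨by simp [condLaw, ENNReal.inv_mul_cancel h0 htop]⟩

theorem condLaw_restrict (hF : MeasurableSet F) :
    (condLaw μ E).restrict F = (μ E)⁻¹ • μ.restrict (E ∩ F) := by
  rw [condLaw, Measure.restrict_smul, Measure.restrict_restrict hF, Set.inter_comm]

theorem condLaw_restrict_eq_smul_condLaw_inter (hF : MeasurableSet F) (h0 : μ (E ∩ F) ≠ 0)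
    (htop : μ (E ∩ F) ≠ ∞) :
    (condLaw μ E).restrict F = (μ (E ∩ F) / μ E) • condLaw μ (E ∩ F) := by
  rw [condLaw_restrict hF, condLaw, smul_smul, div_eq_mul_inv, mul_comm (μ (E ∩ F)), mul_assoc,
    ENNReal.mul_inv_cancel h0 htop, mul_one]

theorem exists_condLaw_restrict_eq_smul (hF : MeasurableSet F) (h0 : 0 < μ E) (htop : μ E < ∞) :
    ∃ c : ℝ≥0, ∃ E' ∈ ({E, E ∩ F} : Set (Set X)), 0 < μ E' ∧ μ E' < ∞ ∧
      (condLaw μ E).restrict F = c • condLaw μ E' := by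
  have htop' : μ (E ∩ F) < ∞ := (measure_mono Set.inter_subset_left).trans_lt htop
  rcases eq_zero_or_pos (μ (E ∩ F)) with h0' | h0'
  · refine ⟨0, E, Or.inl rfl, h0, htop, ?_⟩
    rw [condLaw_restrict hF, Measure.restrict_eq_zero.mpr h0', smul_zero, zero_smul]
  · refine ⟨(μ (E ∩ F) / μ E).toNNReal, E ∩ F, Or.inr rfl, h0', htop', ?_⟩
    rw [ENNReal.smul_def, ENNReal.coe_toNNReal (ENNReal.div_ne_top htop'.ne h0.ne'),
      condLaw_restrict_eq_smul_condLaw_inter hF h0'.ne' htop'.ne]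

end CondLaw

theorem isPiSystem_setOf_univ_pi_const {ι X : Type*} {ℰ : Set (Set X)}
    (hcap : ∀ E ∈ ℰ, ∀ F ∈ ℰ, E ∩ F ∈ ℰ) :
    IsPiSystem {s : Set (ι → X) | ∃ E ∈ ℰ, s = Set.univ.pi fun _ => E} := by
  rintro _ ⟨E, hE, rfl⟩ _ ⟨F, hF, rfl⟩ -
  exact ⟨E ∩ F, hcap E hE F hF, Set.pi_inter_distrib.symm⟩

/-- **Lemma (completeness part).** If `ℰ` is closed under finite intersections, then the
σ-algebra generated on `Xⁿ` by the products `Eⁿ`, `E ∈ ℰ`, is complete for the model of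
`n`-fold products of the conditional laws `μ(·|E)`, `E ∈ ℰ`, `0 < μ(E) < ∞`.
No σ-finiteness of `μ` is required. -/
theorem products_generate_complete_for_conditional_laws
    {X : Type*} [mX : MeasurableSpace X] (μ : Measure X)
    (ℰ : Set (Set X)) (hℰ : ∀ E ∈ ℰ, MeasurableSet E)
    (hcap : ∀ E ∈ ℰ, ∀ F ∈ ℰ, E ∩ F ∈ ℰ) (n : ℕ) :
    IsLSComplete MeasurableSpace.pi
      (MeasurableSpace.generateFrom
        {s : Set (Fin n → X) | ∃ E ∈ ℰ, s = Set.univ.pi fun _ : Fin n => E})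
      {P : Measure (Fin n → X) | ∃ E ∈ ℰ, 0 < μ E ∧ μ E < ⊤ ∧
        P = Measure.pi fun _ : Fin n => condLaw μ E} := by
  rintro h hmeas hint hzero _ ⟨E, hE, h0, htop, rfl⟩
  have := isProbabilityMeasure_condLaw_s11 h0.ne' htop.ne
  have hle : MeasurableSpace.generateFrom
      {s : Set (Fin n → X) | ∃ E ∈ ℰ, s = Set.univ.pi fun _ : Fin n => E} ≤ MeasurableSpace.pi :=
    MeasurableSpace.generateFrom_le fun _ ⟨F, hF, hs⟩ => hs ▸ .univ_pi fun _ => hℰ F hF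
  refine ae_eq_zero_of_isPiSystem hle rfl (isPiSystem_setOf_univ_pi_const hcap)
    (hint _ ⟨E, hE, h0, htop, rfl⟩) hmeas.stronglyMeasurable (hzero _ ⟨E, hE, h0, htop, rfl⟩) ?_
  rintro _ ⟨F, hF, rfl⟩
  obtain ⟨c, E', hE', h0', htop', hrestrict⟩ :=
    exists_condLaw_restrict_eq_smul (hℰ F hF) h0 htop
  have hE'ℰ : E' ∈ ℰ := by
    rcases hE' with rfl | rfl
    exacts [hE, hcap E hE F hF]
  have := isProbabilityMeasure_condLaw_s11 h0'.ne' htop'.ne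
  rw [Measure.restrict_pi_pi, hrestrict, Measure.pi_const_smul, integral_smul_nnreal_measure,
    hzero _ ⟨E', hE'ℰ, h0', htop', rfl⟩, smul_zero]
end

section
/- There exists a model P = {P_θ : θ ∈ Θ₁ × Θ₂} on a finite measurable space with sub-σ-algebras C₁, C₂ such that for each θ₂, C₁ is complete and sufficient for {P_{θ₁,θ₂} : θ₁ ∈ Θ₁}, and for each θ₁, C₂ is complete and sufficient for {P_{θ₁,θ₂} : θ₂ ∈ Θ₂}, yet C₁ ⋁ C₂ is not sufficient for P. Concretely: X = {1,2,3} with power set σ-algebra, Θ₁ = Θ₂ = {1,2}, densities with respect to counting measure f_{1,1} = 1/3, f_{1,2} = f_{2,1} = 1_{{3}}, f_{2,2}(x) = x/6, and C₁ = C₂ = {∅, {1,2}, {3}, X}. -/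
open MeasureTheory

/-! The σ-algebra generated by the partition `{{1, 2}, {3}}` is sufficient for a family exactly
when the conditional weights `P {x} / P (atom of x)` do not depend on `P`, and complete for a
family containing two measures whose matrix of atom masses is nonsingular. Each one-parameter
submodel pairs the point mass at `3` with `P₁₁` or with `P₂₂`, so both criteria hold. But the
conditional weight of `1` given `{1, 2}` is `1/2` under `P₁₁` and `1/3` under `P₂₂`, so the join
`C ⊔ C = C` is not sufficient for the whole model. -/

open scoped NNReal ENNReal

section Comap

variable {X Y : Type*} {mX : MeasurableSpace X}

lemma integral_comp_bool {f : X → Bool} (hf : Measurable f) (k : Bool → ℝ) (P : Measure X)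
    [IsFiniteMeasure P] :
    ∫ x, k (f x) ∂P = P.real (f ⁻¹' {false}) * k false + P.real (f ⁻¹' {true}) * k true := by
  rw [← integral_map hf.aemeasurable Measurable.of_discrete.aestronglyMeasurable,
    integral_fintype .of_finite, Fintype.sum_bool,
    map_measureReal_apply hf (measurableSet_singleton _),
    map_measureReal_apply hf (measurableSet_singleton _), smul_eq_mul, smul_eq_mul, add_comm]

theorem isLSComplete_comap_bool_of_det_ne_zero {f : X → Bool} (hf : Measurable f)
    {M : Set (Measure X)} {P Q : Measure X} [IsFiniteMeasure P] [IsFiniteMeasure Q]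
    (hP : P ∈ M) (hQ : Q ∈ M)
    (hdet : P.real (f ⁻¹' {false}) * Q.real (f ⁻¹' {true})
      - P.real (f ⁻¹' {true}) * Q.real (f ⁻¹' {false}) ≠ 0) :
    IsLSComplete mX (MeasurableSpace.comap f ⊤) M := by
  intro h hh _ hzero R _
  set k : Bool → ℝ := Function.extend f h 0
  have hk : ∀ x, h x = k (f x) := fun x => (hh.factorsThrough.extend_apply 0 x).symm
  have hP0 := hzero P hP
  have hQ0 := hzero Q hQ
  simp only [hk, integral_comp_bool hf] at hP0 hQ0
  have hfalse : k false = 0 := by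
    refine (mul_eq_zero.1 ?_).resolve_right hdet
    linear_combination Q.real (f ⁻¹' {true}) * hP0 - P.real (f ⁻¹' {true}) * hQ0
  have htrue : k true = 0 := by
    refine (mul_eq_zero.1 ?_).resolve_right hdet
    linear_combination P.real (f ⁻¹' {false}) * hQ0 - Q.real (f ⁻¹' {false}) * hP0
  refine Filter.Eventually.of_forall fun x => ?_
  rw [hk]
  cases f x <;> assumption

variable {mY : MeasurableSpace Y} [MeasurableSingletonClass Y]

lemma measurableSet_comap_preimage_singleton (f : X → Y) (y : Y) :
    MeasurableSet[mY.comap f] (f ⁻¹' {y}) :=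
  ⟨{y}, measurableSet_singleton y, rfl⟩

variable [DiscreteMeasurableSpace X]

theorem IsLSSufficient.exists_conditional_weights {f : X → Y} {M : Set (Measure X)}
    (hsuff : IsLSSufficient mX (mY.comap f) M) :
    ∃ q : X → ℝ, ∀ P ∈ M, ∀ x, P.real {x} = q x * P.real (f ⁻¹' {f x}) := by
  choose g hg_meas hg using fun x => hsuff {x} .of_discrete
  refine ⟨fun x => g x x, fun P hP x => ?_⟩
  have hfibre := hg x P hP _ (measurableSet_comap_preimage_singleton f (f x))
  have hx : f ⁻¹' {f x} ∩ {x} = {x} := Set.inter_eq_right.2 (by simp)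
  have hconst : ∀ y ∈ f ⁻¹' {f x}, g x y = g x x := fun y hy => (hg_meas x).factorsThrough hy
  rw [hx, setIntegral_congr_fun .of_discrete hconst, setIntegral_const, smul_eq_mul,
    mul_comm] at hfibre
  exact hfibre.symm

theorem isLSSufficient_comap_of_conditional_weights [Fintype X] {f : X → Y}
    {M : Set (Measure X)} (hM : ∀ P ∈ M, IsFiniteMeasure P) (q : X → ℝ)
    (hq : ∀ P ∈ M, ∀ x, P.real {x} = q x * P.real (f ⁻¹' {f x})) :
    IsLSSufficient mX (mY.comap f) M := by
  intro A _
  classical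
  refine ⟨fun x => ∑ y with y ∈ A, q y * (f ⁻¹' {f y}).indicator 1 x, ?_, ?_⟩
  · exact Finset.measurable_sum _ fun y _ =>
      (measurable_const.indicator (measurableSet_comap_preimage_singleton f (f y))).const_mul _
  rintro P hP _ ⟨t, -, rfl⟩
  have := hM P hP
  calc ∫ x in f ⁻¹' t, ∑ y with y ∈ A, q y * (f ⁻¹' {f y}).indicator 1 x ∂P
      = ∑ y with y ∈ A, q y * P.real (f ⁻¹' t ∩ f ⁻¹' {f y}) := by
        rw [integral_finsetSum _ fun y _ => Integrable.of_finite]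
        refine Finset.sum_congr rfl fun y _ => ?_
        rw [integral_const_mul, integral_indicator_one .of_discrete,
          measureReal_restrict_apply .of_discrete, Set.inter_comm]
    _ = ∑ y with y ∈ A, if y ∈ f ⁻¹' t then P.real {y} else 0 := by
        refine Finset.sum_congr rfl fun y _ => ?_
        rw [← Set.preimage_inter]
        split_ifs with hy
        · rw [Set.inter_eq_right.2 (Set.singleton_subset_iff.2 hy : {f y} ⊆ t), hq P hP]
        · rw [(Set.inter_singleton_eq_empty.2 hy : t ∩ {f y} = ∅), Set.preimage_empty,
            measureReal_empty, mul_zero]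
    _ = P.real (f ⁻¹' t ∩ A) := by
        rw [← Finset.sum_filter, sum_measureReal_singleton]
        congr 1
        ext
        simp [and_comm]

end Comap

/-- Points `0, 1, 2 : Fin 3` stand for `1, 2, 3` and `(i, j)` for `(i + 1, j + 1)`. -/
noncomputable def density (θ : Fin 2 × Fin 2) (x : Fin 3) : ℝ≥0 :=
  if θ = (0, 0) then 1 / 3 else if θ = (1, 1) then ((x : ℕ) + 1) / 6 else if x = 2 then 1 else 0

noncomputable def model (θ : Fin 2 × Fin 2) : Measure (Fin 3) :=
  Measure.count.withDensity fun x => density θ x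

lemma model_swap (i j : Fin 2) : model (i, j) = model (j, i) := by
  fin_cases i <;> fin_cases j <;> rfl

lemma model_univ (θ : Fin 2 × Fin 2) : model θ Set.univ = ∑ x, (density θ x : ℝ≥0∞) := by
  rw [model, withDensity_apply _ .univ, Measure.restrict_univ, lintegral_count, tsum_fintype]

instance (θ : Fin 2 × Fin 2) : IsProbabilityMeasure (model θ) := by
  constructor
  rw [model_univ, ← ENNReal.ofNNReal_finsetSum, ENNReal.coe_eq_one, ← NNReal.coe_eq_one]
  fin_cases θ <;> simp [density, Fin.sum_univ_three]
  norm_num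

lemma model_real_singleton (θ : Fin 2 × Fin 2) (x : Fin 3) :
    (model θ).real {x} = density θ x := by
  rw [measureReal_def, model, withDensity_apply _ (measurableSet_singleton x), lintegral_singleton]
  simp

lemma model_real_finset (θ : Fin 2 × Fin 2) (s : Finset (Fin 3)) :
    (model θ).real s = ∑ x ∈ s, (density θ x : ℝ) := by
  simp [← sum_measureReal_singleton, model_real_singleton]

def isThree (x : Fin 3) : Bool := x = 2

lemma measurable_isThree : Measurable isThree := .of_discrete

lemma model_real_isThree_false (θ : Fin 2 × Fin 2) :
    (model θ).real (isThree ⁻¹' {false}) = density θ 0 + density θ 1 := by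
  have : isThree ⁻¹' {false} = ↑({0, 1} : Finset (Fin 3)) := by
    ext x
    fin_cases x <;> simp [isThree]
  rw [this, model_real_finset, Finset.sum_pair (by decide)]

lemma model_real_isThree_true (θ : Fin 2 × Fin 2) :
    (model θ).real (isThree ⁻¹' {true}) = density θ 2 := by
  have : isThree ⁻¹' {true} = {2} := by
    ext x
    fin_cases x <;> simp [isThree]
  rw [this, model_real_singleton]

theorem isLSComplete_model_fixed_snd (j : Fin 2) :
    IsLSComplete ⊤ (MeasurableSpace.comap isThree ⊤) {R | ∃ i, R = model (i, j)} := by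
  refine isLSComplete_comap_bool_of_det_ne_zero measurable_isThree ⟨0, rfl⟩ ⟨1, rfl⟩ ?_
  simp only [model_real_isThree_false, model_real_isThree_true]
  fin_cases j <;> norm_num [density, Fin.ext_iff]

theorem isLSSufficient_model_fixed_snd (j : Fin 2) :
    IsLSSufficient ⊤ (MeasurableSpace.comap isThree ⊤) {R | ∃ i, R = model (i, j)} := by
  refine isLSSufficient_comap_of_conditional_weights (by rintro _ ⟨i, rfl⟩; infer_instance)
    (if j = 0 then ![1 / 2, 1 / 2, 1] else ![1 / 3, 2 / 3, 1]) ?_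
  rintro _ ⟨i, rfl⟩ x
  fin_cases i <;> fin_cases j <;> fin_cases x <;>
    simp [isThree, model_real_singleton, model_real_isThree_false, model_real_isThree_true,
      density] <;> norm_num

theorem not_isLSSufficient_model :
    ¬ IsLSSufficient ⊤ (MeasurableSpace.comap isThree ⊤) (Set.range model) := by
  intro hsuff
  obtain ⟨q, hq⟩ := hsuff.exists_conditional_weights
  have h₁₁ : (1 / 3 : ℝ) = q 0 * (2 / 3) := by
    have h := hq _ ⟨(0, 0), rfl⟩ 0
    simp [isThree, model_real_singleton, model_real_isThree_false, density] at h
    linarith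
  have h₂₂ : (1 / 6 : ℝ) = q 0 * (1 / 2) := by
    have h := hq _ ⟨(1, 1), rfl⟩ 0
    simp [isThree, model_real_singleton, model_real_isThree_false, density] at h
    linarith
  linarith

/-- **Counterexample.** There is a model on a finite measurable space (here `Fin 3` with
its power set σ-algebra), indexed by `Fin 2 × Fin 2`, and sub-σ-algebras `C₁, C₂` such
that `C₁` is complete sufficient for each submodel with fixed second parameter, `C₂` is
complete sufficient for each submodel with fixed first parameter, and yet `C₁ ⊔ C₂` is
not sufficient for the whole model. -/
theorem exists_partially_complete_sufficient_but_join_insufficient :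
    ∃ P : Fin 2 × Fin 2 → @Measure (Fin 3) ⊤,
      ∃ C₁ C₂ : MeasurableSpace (Fin 3),
        C₁ ≤ ⊤ ∧ C₂ ≤ ⊤ ∧
        (∀ θ, @IsProbabilityMeasure (Fin 3) ⊤ (P θ)) ∧
        (∀ θ₂ : Fin 2, IsLSComplete ⊤ C₁ {R | ∃ θ₁, R = P (θ₁, θ₂)} ∧
          IsLSSufficient ⊤ C₁ {R | ∃ θ₁, R = P (θ₁, θ₂)}) ∧
        (∀ θ₁ : Fin 2, IsLSComplete ⊤ C₂ {R | ∃ θ₂, R = P (θ₁, θ₂)} ∧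
          IsLSSufficient ⊤ C₂ {R | ∃ θ₂, R = P (θ₁, θ₂)}) ∧
        ¬ IsLSSufficient ⊤ (C₁ ⊔ C₂) (Set.range P) := by
  refine ⟨model, .comap isThree ⊤, .comap isThree ⊤, le_top, le_top, inferInstance,
    fun j => ⟨isLSComplete_model_fixed_snd j, isLSSufficient_model_fixed_snd j⟩,
    fun i => ?_, by rw [sup_idem]; exact not_isLSSufficient_model⟩
  simp_rw [model_swap i]
  exact ⟨isLSComplete_model_fixed_snd i, isLSSufficient_model_fixed_snd i⟩
end

section
/- There exists a non-σ-finite measure space (X, A, μ) and an intersection-stable collection E ⊆ A such that the σ-algebra C := σ(E : E ∈ E) is not sufficient for the model P := {μ(·|E) : E ∈ E, 0 < μ(E) < ∞}. Concretely: X = ℝ with its Borel σ-algebra, μ the counting measure, E the collection of all singletons together with the empty set, and n = 1; then C is the countable-cocountable σ-algebra and is not sufficient for the family of all Dirac measures {δ_x : x ∈ ℝ}. -/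
open MeasureTheory

@[reducible] def MeasurableSpace.countableCocountable (α : Type*) : MeasurableSpace α where
  MeasurableSet' s := s.Countable ∨ sᶜ.Countable
  measurableSet_empty := .inl Set.countable_empty
  measurableSet_compl s := by
    rw [compl_compl]
    exact Or.symm
  measurableSet_iUnion f hf := by
    by_cases hcount : ∀ i, (f i).Countable
    · exact .inl (Set.countable_iUnion hcount)
    · push Not at hcount
      obtain ⟨i, hi⟩ := hcount
      refine .inr ((hf i).resolve_left hi |>.mono ?_)
      rw [Set.compl_iUnion]
      exact Set.iInter_subset _ i

namespace MeasurableSpace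

theorem countable_or_compl_countable_of_measurableSet_generateFrom {α : Type*}
    {S : Set (Set α)} (hS : ∀ s ∈ S, s.Countable) {A : Set α}
    (hA : MeasurableSet[generateFrom S] A) : A.Countable ∨ Aᶜ.Countable :=
  generateFrom_le (m := countableCocountable α) (fun s hs => .inl (hS s hs)) A hA

end MeasurableSpace

namespace MeasureTheory.Measure

theorem countable_of_sigmaFinite_count {α : Type*} [MeasurableSpace α]
    [SigmaFinite (count : Measure α)] : Countable α := by
  rw [← Set.countable_univ_iff, ← iUnion_spanningSets (count : Measure α)]
  exact Set.countable_iUnion fun n =>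
    ((count_apply_lt_top' (measurableSet_spanningSets _ n)).mp
      (measure_spanningSets_lt_top _ n)).countable

theorem not_sigmaFinite_count {α : Type*} [MeasurableSpace α] [Uncountable α] :
    ¬ SigmaFinite (count : Measure α) := fun _ =>
  not_countable (α := α) countable_of_sigmaFinite_count

theorem condLaw_singleton {α : Type*} [MeasurableSpace α] {μ : Measure α} {x : α}
    (h0 : μ {x} ≠ 0) (htop : μ {x} ≠ ⊤) : condLaw μ {x} = dirac x := by
  rw [condLaw, restrict_singleton, smul_smul, ENNReal.inv_mul_cancel h0 htop, one_smul]

end MeasureTheory.Measure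

/-- Against a Dirac measure `δ_x` a version of `P(A | C)` must take the value `1_A(x)` at `x`;
so a common version for all Dirac measures is `1_A` itself. -/
theorem IsLSSufficient.measurableSet_of_forall_dirac_mem {X : Type*} {C : MeasurableSpace X}
    [mX : MeasurableSpace X] [MeasurableSingletonClass X] {M : Set (Measure X)}
    (hsuff : IsLSSufficient mX C M) (hM : ∀ x, Measure.dirac x ∈ M) {A : Set X}
    (hA : MeasurableSet A) : MeasurableSet[C] A := by
  obtain ⟨g, hgC, hg⟩ := hsuff A hA
  have hg_eq : g = A.indicator fun _ => 1 := by
    funext x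
    have := hg _ (hM x) Set.univ MeasurableSet.univ
    rw [Measure.restrict_univ, integral_dirac, Set.univ_inter,
      Measure.dirac_apply' _ hA] at this
    rw [this]
    by_cases hx : x ∈ A <;> simp [hx]
  exact (measurable_indicator_const_iff (m := C) (1 : ℝ)).mp (hg_eq ▸ hgC)

/-- **Counterexample.** The counting measure on `ℝ` (with the Borel σ-algebra) is not
σ-finite, and the σ-algebra generated by the singletons and the empty set (the
countable–cocountable σ-algebra) is not sufficient for the model of conditional laws
`{μ(·|E) : E a singleton or ∅, 0 < μ(E) < ∞}`, i.e. for the family of Dirac measures. -/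
theorem counting_measure_singleton_truncations_not_sufficient :
    ¬ SigmaFinite (Measure.count : Measure ℝ) ∧
      ¬ IsLSSufficient (inferInstance : MeasurableSpace ℝ)
          (MeasurableSpace.generateFrom {s : Set ℝ | (∃ x : ℝ, s = {x}) ∨ s = ∅})
          {P : Measure ℝ | ∃ E : Set ℝ, ((∃ x : ℝ, E = {x}) ∨ E = ∅) ∧
            0 < Measure.count E ∧ Measure.count E < ⊤ ∧
            P = condLaw Measure.count E} := by
  refine ⟨Measure.not_sigmaFinite_count, fun hsuff => ?_⟩
  have hdirac_mem (x : ℝ) : Measure.dirac x ∈ {P : Measure ℝ | ∃ E : Set ℝ,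
      ((∃ x : ℝ, E = {x}) ∨ E = ∅) ∧ 0 < Measure.count E ∧ Measure.count E < ⊤ ∧
        P = condLaw Measure.count E} :=
    ⟨{x}, .inl ⟨x, rfl⟩, by simp, by simp,
      (Measure.condLaw_singleton (by simp) (by simp)).symm⟩
  have hIio := hsuff.measurableSet_of_forall_dirac_mem hdirac_mem (measurableSet_Iio (a := 0))
  rcases MeasurableSpace.countable_or_compl_countable_of_measurableSet_generateFrom
    (by rintro s (⟨x, rfl⟩ | rfl) <;> simp) hIio with hcount | hcount
  -- countable sets are Lebesgue-null, while `Iio 0` and `Ici 0` have infinite measure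
  all_goals simpa using hcount.measure_zero volume
end
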